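/- arXiv:2305.05130 — 8 statements merged into one kernel-verified Lean document; each statement's English description precedes it below -/
import Mathlib

section
/- Let {G_m(z)} be the sequence of polynomials generated by 1/(1+t+zt^2) = Σ_{m≥0} G_m(z) t^m, i.e. G_0 = 1, G_1 = −1, G_m = −G_{m−1} − z G_{m−2}. Then for every m ≥ 0, all zeros of G_m(z) lie in the real interval (1/4, ∞). -/
/-!
Write `z = αβ` with `α + β = -1`, so that `α, β` are the roots of `t² + t + z` and
`(α - β) G_m(z) = α^(m+1) - β^(m+1)`. At the double root `z = 1/4` one has
`G_m(1/4) = (m+1)(-1/2)^m ≠ 0`. Otherwise a zero of `G_m` forces `α^(m+1) = β^(m+1)`,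
hence `‖α‖ = ‖β‖`; together with `α + β = -1` this makes `z = αβ = ‖α‖²` real, and the
parallelogram law gives `4z = ‖α + β‖² + ‖α - β‖² = 1 + ‖α - β‖² > 1`.
-/

open Polynomial ComplexConjugate

namespace Complex

theorem exists_add_eq_neg_one_and_mul_eq (z : ℂ) : ∃ α β : ℂ, α + β = -1 ∧ α * β = z := by
  obtain ⟨s, hs⟩ := IsAlgClosed.exists_pow_nat_eq (1 - 4 * z) two_pos
  exact ⟨(-1 + s) / 2, (-1 - s) / 2, by ring, by linear_combination (-1 / 4 : ℂ) * hs⟩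

theorem mul_eq_norm_sq_of_norm_eq_of_add_eq_neg_one {α β : ℂ} (hnorm : ‖α‖ = ‖β‖)
    (hsum : α + β = -1) : α * β = (‖α‖ ^ 2 : ℝ) := by
  have hα := mul_conj' α
  have hβ := mul_conj' β
  have hconj : conj α + conj β = -1 := by simpa using congrArg conj hsum
  rw [hnorm] at hα ⊢
  push_cast
  linear_combination α * β * hconj - α * hβ - β * hα - (‖β‖ : ℂ) ^ 2 * hsum

theorem exists_one_div_four_lt_of_norm_eq_of_add_eq_neg_one {α β : ℂ} (hne : α ≠ β)
    (hnorm : ‖α‖ = ‖β‖) (hsum : α + β = -1) : ∃ x : ℝ, 1 / 4 < x ∧ α * β = x := by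
  refine ⟨‖α‖ ^ 2, ?_, mul_eq_norm_sq_of_norm_eq_of_add_eq_neg_one hnorm hsum⟩
  have hpar := parallelogram_law_with_norm ℝ α β
  have hdiff : 0 < ‖α - β‖ := norm_pos_iff.mpr (sub_ne_zero.mpr hne)
  rw [hsum, ← hnorm, norm_neg, norm_one] at hpar
  nlinarith

end Complex

section Recurrence

variable {G : ℕ → ℂ[X]} (h0 : G 0 = 1) (h1 : G 1 = -1)
  (hrec : ∀ m : ℕ, G (m + 2) = -G (m + 1) - X * G m)
include h0 h1 hrec

theorem eval_one_div_four_of_recurrence (n : ℕ) :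
    (G n).eval (1 / 4) = (n + 1) * (-1 / 2) ^ n := by
  induction n using Nat.twoStepInduction with
  | zero => simp [h0]
  | one => norm_num [h1]
  | more n ih ih' =>
    rw [hrec, eval_sub, eval_neg, eval_mul, eval_X, ih, ih']
    push_cast
    ring

theorem sub_mul_eval_mul_of_recurrence {α β : ℂ} (hsum : α + β = -1) (n : ℕ) :
    (α - β) * (G n).eval (α * β) = α ^ (n + 1) - β ^ (n + 1) := by
  induction n using Nat.twoStepInduction with
  | zero => simp [h0]
  | one =>
    rw [h1, eval_neg, eval_one]
    linear_combination (β - α) * hsum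
  | more n ih ih' =>
    rw [hrec, eval_sub, eval_neg, eval_mul, eval_X]
    linear_combination -ih' - α * β * ih - (α ^ (n + 2) - β ^ (n + 2)) * hsum

end Recurrence

/-- If `G_0 = 1`, `G_1 = -1`, and `G_m = -G_{m-1} - X·G_{m-2}` (the polynomials
generated by `1/(1+t+zt²)`), then every zero of `G_m` is a real number in
`(1/4, ∞)`. -/
theorem stmt_4 (G : ℕ → Polynomial ℂ)
    (h0 : G 0 = 1) (h1 : G 1 = -1)
    (hrec : ∀ m : ℕ, G (m + 2) = -G (m + 1) - Polynomial.X * G m) :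
    ∀ m : ℕ, ∀ z : ℂ, (G m).eval z = 0 → ∃ x : ℝ, 1 / 4 < x ∧ z = (x : ℂ) := by
  intro m z hz
  obtain ⟨α, β, hsum, rfl⟩ := Complex.exists_add_eq_neg_one_and_mul_eq z
  rcases eq_or_ne α β with rfl | hne
  · have hα : α = -1 / 2 := by linear_combination hsum / 2
    rw [hα, show (-1 / 2 : ℂ) * (-1 / 2) = 1 / 4 by norm_num,
      eval_one_div_four_of_recurrence h0 h1 hrec] at hz
    exact absurd hz (mul_ne_zero (Nat.cast_add_one_ne_zero m) (pow_ne_zero _ (by norm_num)))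
  · have hpow : α ^ (m + 1) = β ^ (m + 1) := by
      have := sub_mul_eval_mul_of_recurrence h0 h1 hrec hsum m
      rwa [hz, mul_zero, eq_comm, sub_eq_zero] at this
    have hnorm : ‖α‖ = ‖β‖ := by
      have := congrArg norm hpow
      rwa [norm_pow, norm_pow, pow_left_inj₀ (norm_nonneg _) (norm_nonneg _) m.succ_ne_zero]
        at this
    exact Complex.exists_one_div_four_lt_of_norm_eq_of_add_eq_neg_one hne hnorm hsum
end

section
/- For θ ∈ (π/2, π), set r(θ) = −2cos θ, t_1 = r e^{iθ}, t_2 = r e^{−iθ}, z(θ) = 1/(4cos²θ). Then t_1 and t_2 are distinct nonzero roots of 1 + t + z(θ) t², and for the polynomials G_m generated by 1/(1+t+zt²), G_m(z(θ)) = 4cos²θ · sin((m+1)θ) / (r^{m+2} sin θ). -/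
open Real Complex

/-!
With `c = cos θ` and `r = -2c` we have `z r² = 1`, so multiplying the recurrence of `G_m(z)` by
`r^{m+2}` turns it into the Chebyshev recurrence `U_{m+2}(c) = 2c U_{m+1}(c) - U_m(c)`; the initial
values agree, hence `G_m(z) r^m = U_m(cos θ) = sin((m+1)θ) / sin θ`. For the roots, `t = r e` with
`e = e^{±iθ}` and `r = -(e + e⁻¹)`, so `1 + t + z t² = 1 + r e + e² = 0`.
-/
open Polynomial.Chebyshev in
theorem eval_mul_pow_eq_chebyshevU {R : Type*} [CommRing R] (G : ℕ → Polynomial R)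
    (h0 : G 0 = 1) (h1 : G 1 = -1)
    (hrec : ∀ m : ℕ, G (m + 2) = -G (m + 1) - Polynomial.X * G m)
    {c z : R} (hz : z * (2 * c) ^ 2 = 1) (m : ℕ) :
    (G m).eval z * (-2 * c) ^ m = (U R m).eval c := by
  induction m using Nat.twoStepInduction with
  | zero => simp [h0]
  | one => simp [h1]
  | more m ih₀ ih₁ =>
    push_cast at ih₁ ⊢
    rw [hrec, U_add_two]
    simp only [Polynomial.eval_sub, Polynomial.eval_neg, Polynomial.eval_mul,
      Polynomial.eval_X, Polynomial.eval_ofNat, ← ih₀, ← ih₁]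
    linear_combination (-(G m).eval z * (-2 * c) ^ m) * hz

theorem one_add_mul_add_mul_sq_eq_zero {K : Type*} [Field K] {e r z : K} (he : e ≠ 0)
    (hr : r = -(e + e⁻¹)) (hz : z * r ^ 2 = 1) :
    1 + r * e + z * (r * e) ^ 2 = 0 := by
  linear_combination e ^ 2 * hz + e * hr - (mul_inv_cancel₀ he)

theorem eval_one_div_four_cos_sq (G : ℕ → Polynomial ℂ)
    (h0 : G 0 = 1) (h1 : G 1 = -1)
    (hrec : ∀ m : ℕ, G (m + 2) = -G (m + 1) - Polynomial.X * G m)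
    {θ : ℝ} (hcos : Real.cos θ ≠ 0) (hsin : Real.sin θ ≠ 0) (m : ℕ) :
    (G m).eval ((1 / (4 * Real.cos θ ^ 2) : ℝ) : ℂ) =
      ((4 * Real.cos θ ^ 2 * Real.sin ((m + 1) * θ) /
        ((-2 * Real.cos θ) ^ (m + 2) * Real.sin θ) : ℝ) : ℂ) := by
  have hz : (1 / (4 * Real.cos θ ^ 2) : ℝ) * (2 * Real.cos θ) ^ 2 = 1 := by field_simp; ring
  have hG := eval_mul_pow_eq_chebyshevU G h0 h1 hrec
    (z := ((1 / (4 * Real.cos θ ^ 2) : ℝ) : ℂ)) (c := Real.cos θ) (by exact_mod_cast hz) m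
  have hU := Polynomial.Chebyshev.U_complex_cos (θ : ℂ) m
  have hden : (((-2 * Real.cos θ) ^ (m + 2) * Real.sin θ : ℝ) : ℂ) ≠ 0 := by
    exact_mod_cast mul_ne_zero (pow_ne_zero _ (mul_ne_zero (by norm_num) hcos)) hsin
  push_cast at hU hG hden ⊢
  rw [eq_div_iff hden]
  linear_combination (4 * Complex.cos θ ^ 2 * Complex.sin θ) * hG + 4 * Complex.cos θ ^ 2 * hU

/-- For `θ ∈ (π/2, π)`, with `r = -2cos θ`, `t₁ = r e^{iθ}`, `t₂ = r e^{-iθ}`,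
`z = 1/(4cos²θ)`: `t₁, t₂` are distinct nonzero roots of `1 + t + z t²`, and
`G_m(z) = 4cos²θ · sin((m+1)θ) / (r^{m+2} sin θ)` for the polynomials `G_m`
generated by `1/(1+t+zt²)`. -/
theorem stmt_5 (G : ℕ → Polynomial ℂ)
    (h0 : G 0 = 1) (h1 : G 1 = -1)
    (hrec : ∀ m : ℕ, G (m + 2) = -G (m + 1) - Polynomial.X * G m)
    (θ : ℝ) (hθ : θ ∈ Set.Ioo (π / 2) π) :
    let r : ℝ := -2 * Real.cos θ
    let t₁ : ℂ := (r : ℂ) * Complex.exp (θ * Complex.I)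
    let t₂ : ℂ := (r : ℂ) * Complex.exp (-θ * Complex.I)
    let z : ℝ := 1 / (4 * Real.cos θ ^ 2)
    t₁ ≠ t₂ ∧ t₁ ≠ 0 ∧ t₂ ≠ 0 ∧
    1 + t₁ + (z : ℂ) * t₁ ^ 2 = 0 ∧ 1 + t₂ + (z : ℂ) * t₂ ^ 2 = 0 ∧
    ∀ m : ℕ, (G m).eval (z : ℂ) =
      ((4 * Real.cos θ ^ 2 * Real.sin ((m + 1) * θ) /
        (r ^ (m + 2) * Real.sin θ) : ℝ) : ℂ) := by
  intro r t₁ t₂ z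
  have hcos : Real.cos θ ≠ 0 :=
    (Real.cos_neg_of_pi_div_two_lt_of_lt hθ.1 (by linarith [hθ.2, Real.pi_pos])).ne
  have hsin : Real.sin θ ≠ 0 :=
    (Real.sin_pos_of_pos_of_lt_pi (by linarith [hθ.1, Real.pi_pos]) hθ.2).ne'
  have hr : r ≠ 0 := by simp [r, hcos]
  set e := Complex.exp (θ * Complex.I)
  have he : Complex.exp (-θ * Complex.I) = e⁻¹ := by rw [neg_mul, Complex.exp_neg]
  have hre : (r : ℂ) = -(e + e⁻¹) := by
    rw [← he, ← Complex.two_cos, ← Complex.ofReal_cos]; push_cast [r]; ring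
  have hzr : (z : ℂ) * (r : ℂ) ^ 2 = 1 := by
    norm_cast; simp only [z, r]; field_simp; ring
  refine ⟨?_, mul_ne_zero (by exact_mod_cast hr) (Complex.exp_ne_zero _),
    mul_ne_zero (by exact_mod_cast hr) (Complex.exp_ne_zero _),
    one_add_mul_add_mul_sq_eq_zero (Complex.exp_ne_zero _) hre hzr, ?_, fun m => ?_⟩
  · intro h
    have him := congrArg Complex.im h
    simp only [t₁, t₂, Complex.im_ofReal_mul, ← Complex.ofReal_neg,
      Complex.exp_ofReal_mul_I_im, Real.sin_neg] at him
    exact mul_ne_zero hr hsin (by linarith)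
  · simp only [t₂, he]
    exact one_add_mul_add_mul_sq_eq_zero (inv_ne_zero (Complex.exp_ne_zero _))
      (by rw [inv_inv, add_comm]; exact hre) hzr
  · exact eval_one_div_four_cos_sq G h0 h1 hrec hcos hsin m
end

section
/- Let {J_m(z)} be defined by J_0 = 1, J_1 = −1, J_2 = 1, and J_m(z) = −J_{m−1}(z) − z J_{m−3}(z) for m ≥ 3. Then for each m ≥ 0, all zeros of J_m(z) lie in the real interval (−∞, −4/27). -/
/-!
If `x₁, x₂, x₃` are the roots of `x³ + x² + z`, then `J_k(z)` times the Vandermonde determinant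
is the alternant `det [xᵢ^(k+2), xᵢ, 1]`. For `c = cos θ ∈ (1/2, 1)` the value
`z = -4c²/(4c²-1)³` makes the roots `r e^{±iθ}` and `s`, with `r = -2c/(4c²-1)`,
`s = 1/(4c²-1)` and `0 < s < -r`; the alternant is then `2ir` times
`G_m(θ) = r^(m+2) sin((m+1)θ) - r^(m+1) s sin((m+2)θ) + s^(m+2) sin θ`.
At `θ = jπ/(m+2)` and `θ = jπ/(m+1)` one of the first two terms vanishes and the dominant power
of `r` gives `G_m` opposite signs, so `G_m` vanishes in each of the `⌊m/3⌋` disjoint windows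
inside `(0, π/3)`. As `θ ↦ z` is strictly decreasing there, this yields `⌊m/3⌋` distinct zeros
of `J_m`, all below `z(0) = -4/27`; since `deg J_m ≤ ⌊m/3⌋`, there are no others.
-/

open Polynomial Real Set Function

theorem Polynomial.mem_range_of_natDegree_le_card {R : Type*} [CommRing R] [IsDomain R]
    {p : R[X]} (hp : p ≠ 0) {ι : Type*} [Fintype ι] {f : ι → R} (hf : Injective f)
    (hroots : ∀ i, p.eval (f i) = 0) (hdeg : p.natDegree ≤ Fintype.card ι) {z : R}
    (hz : p.eval z = 0) : z ∈ range f := by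
  classical
  by_contra hne
  refine hp (eq_zero_of_natDegree_lt_card_of_eval_eq_zero' p
    (insert z (Finset.univ.image f)) ?_ ?_)
  · simp [hz, hroots]
  · rw [Finset.card_insert_of_notMem (by simpa using hne), Finset.card_image_of_injective _ hf,
      Finset.card_univ]
    omega

structure IsJSequence {R : Type*} [Ring R] (J : ℕ → R[X]) : Prop where
  zero : J 0 = 1
  one : J 1 = -1
  two : J 2 = 1
  step : ∀ m, J (m + 3) = -J (m + 2) - X * J m

def alternant {R : Type*} [CommRing R] (x₁ x₂ x₃ : R) (k : ℕ) : R :=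
  x₁ ^ (k + 2) * (x₂ - x₃) - x₂ ^ (k + 2) * (x₁ - x₃) + x₃ ^ (k + 2) * (x₁ - x₂)

theorem alternant_zero {R : Type*} [CommRing R] (x₁ x₂ x₃ : R) :
    alternant x₁ x₂ x₃ 0 = (x₁ - x₂) * (x₁ - x₃) * (x₂ - x₃) := by
  unfold alternant; ring

namespace IsJSequence

variable {R : Type*}

theorem coeff_zero [Ring R] {J : ℕ → R[X]} (hJ : IsJSequence J) :
    ∀ m, (J m).coeff 0 = (-1) ^ m
  | 0 => by simp [hJ.zero]
  | 1 => by simp [hJ.one]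
  | 2 => by simp [hJ.two]
  | m + 3 => by simp [hJ.step, hJ.coeff_zero (m + 2), pow_succ]

theorem ne_zero [Ring R] [Nontrivial R] {J : ℕ → R[X]} (hJ : IsJSequence J) (m : ℕ) : J m ≠ 0 :=
  fun h ↦ ((isUnit_neg_one (α := R)).pow m).ne_zero <| by
    rw [← hJ.coeff_zero m, h, Polynomial.coeff_zero]

theorem natDegree_le [Ring R] {J : ℕ → R[X]} (hJ : IsJSequence J) :
    ∀ m, (J m).natDegree ≤ m / 3
  | 0 => by simp [hJ.zero]
  | 1 => by simp [hJ.one]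
  | 2 => by simp [hJ.two]
  | m + 3 => by
    rw [hJ.step]
    refine (natDegree_sub_le _ _).trans (max_le ?_ ?_)
    · rw [natDegree_neg]; exact (hJ.natDegree_le (m + 2)).trans (by omega)
    · have := hJ.natDegree_le m
      have := natDegree_X_le (R := R)
      exact natDegree_mul_le.trans (by omega)

theorem eval_mul_alternant [CommRing R] {J : ℕ → R[X]} (hJ : IsJSequence J) {z x₁ x₂ x₃ : R}
    (h₁ : x₁ ^ 3 + x₁ ^ 2 + z = 0) (h₂ : x₂ ^ 3 + x₂ ^ 2 + z = 0) (h₃ : x₃ ^ 3 + x₃ ^ 2 + z = 0) :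
    ∀ k, (J k).eval z * alternant x₁ x₂ x₃ 0 = alternant x₁ x₂ x₃ k
  | 0 => by simp [hJ.zero]
  | 1 => by
    simp only [hJ.one, eval_neg, eval_one, alternant]
    linear_combination -(x₂ - x₃) * h₁ + (x₁ - x₃) * h₂ - (x₁ - x₂) * h₃
  | 2 => by
    simp only [hJ.two, eval_one, alternant]
    linear_combination -(x₁ - 1) * (x₂ - x₃) * h₁ + (x₂ - 1) * (x₁ - x₃) * h₂
      - (x₃ - 1) * (x₁ - x₂) * h₃
  | k + 3 => by
    have ih₀ := hJ.eval_mul_alternant h₁ h₂ h₃ k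
    have ih₂ := hJ.eval_mul_alternant h₁ h₂ h₃ (k + 2)
    simp only [hJ.step, eval_sub, eval_neg, eval_mul, eval_X]
    unfold alternant at *
    linear_combination -ih₂ - z * ih₀ - x₁ ^ (k + 2) * (x₂ - x₃) * h₁
      + x₂ ^ (k + 2) * (x₁ - x₃) * h₂ - x₃ ^ (k + 2) * (x₁ - x₂) * h₃

end IsJSequence

noncomputable def rParam (c : ℝ) : ℝ := -2 * c / (4 * c ^ 2 - 1)
noncomputable def sParam (c : ℝ) : ℝ := 1 / (4 * c ^ 2 - 1)
noncomputable def zParam (c : ℝ) : ℝ := -4 * c ^ 2 / (4 * c ^ 2 - 1) ^ 3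

theorem cubic_eq_mul_quadratic {c : ℝ} (hc : 4 * c ^ 2 - 1 ≠ 0) (x : ℂ) :
    x ^ 3 + x ^ 2 + zParam c =
      (x - sParam c) * (x ^ 2 - 2 * rParam c * c * x + rParam c ^ 2) := by
  have hc' : (4 * (c : ℂ) ^ 2 - 1) ≠ 0 := by exact_mod_cast hc
  simp only [rParam, sParam, zParam]
  push_cast
  field_simp
  ring

theorem four_mul_sq_sub_one_pos {c : ℝ} (hc : 1 / 2 < c) : 0 < 4 * c ^ 2 - 1 := by
  nlinarith

theorem rParam_neg {c : ℝ} (hc : 1 / 2 < c) : rParam c < 0 :=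
  div_neg_of_neg_of_pos (by linarith) (by nlinarith)

theorem sParam_pos {c : ℝ} (hc : 1 / 2 < c) : 0 < sParam c :=
  one_div_pos.2 (by nlinarith)

theorem sParam_lt_neg_rParam {c : ℝ} (hc : 1 / 2 < c) : sParam c < -rParam c := by
  rw [rParam, sParam, ← neg_div, div_lt_div_iff_of_pos_right (by nlinarith)]
  linarith

theorem strictMonoOn_zParam : StrictMonoOn zParam (Ioi (1 / 2)) := by
  intro a ha b hb hab
  have hu : 0 < 4 * a ^ 2 - 1 := by nlinarith [mem_Ioi.1 ha]
  have huv : 4 * a ^ 2 - 1 < 4 * b ^ 2 - 1 := by nlinarith [mem_Ioi.1 ha]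
  set u := 4 * a ^ 2 - 1
  set v := 4 * b ^ 2 - 1
  have hzu : zParam a = -(u + 1) / u ^ 3 := by simp only [zParam, u]; ring
  have hzv : zParam b = -(v + 1) / v ^ 3 := by simp only [zParam, v]; ring
  rw [hzu, hzv, div_lt_div_iff₀ (by positivity) (pow_pos (hu.trans huv) 3)]
  nlinarith [pow_lt_pow_left₀ huv hu.le three_ne_zero, mul_pos hu (hu.trans huv),
    mul_pos (mul_pos hu (hu.trans huv)) (sub_pos.2 huv)]

theorem half_lt_cos {θ : ℝ} (hθ : θ ∈ Ico 0 (π / 3)) : 1 / 2 < cos θ := by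
  rw [← cos_pi_div_three]
  exact cos_lt_cos_of_nonneg_of_le_pi hθ.1 (by linarith [pi_pos]) hθ.2

theorem strictAntiOn_zParam_cos : StrictAntiOn (fun θ ↦ zParam (cos θ)) (Ico 0 (π / 3)) :=
  strictMonoOn_zParam.comp_strictAntiOn
    (strictAntiOn_cos.mono fun _ hθ ↦ ⟨hθ.1, by linarith [hθ.2, pi_pos]⟩)
    fun _ hθ ↦ half_lt_cos hθ

theorem zParam_cos_lt {θ : ℝ} (hθ : θ ∈ Ioo 0 (π / 3)) : zParam (cos θ) < -4 / 27 :=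
  calc zParam (cos θ) < zParam (cos 0) :=
        strictAntiOn_zParam_cos ⟨le_rfl, by positivity⟩ (Ioo_subset_Ico_self hθ) hθ.1
    _ = -4 / 27 := by norm_num [zParam]

noncomputable def sinSum (m : ℕ) (r s θ : ℝ) : ℝ :=
  r ^ (m + 2) * sin ((m + 1) * θ) - r ^ (m + 1) * s * sin ((m + 2) * θ) + s ^ (m + 2) * sin θ

section

open Complex

theorem two_mul_I_mul_sin (x : ℂ) : 2 * I * Complex.sin x = exp (x * I) - exp (-x * I) := by
  linear_combination I * two_sin x + (exp (-x * I) - exp (x * I)) * I_sq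

theorem alternant_exp_mul_I (m : ℕ) (r s θ : ℝ) :
    alternant (r * exp (θ * I)) (r * exp (-θ * I)) (s : ℂ) m = 2 * I * r * sinSum m r s θ := by
  set w := exp (θ * I)
  set v := exp (-θ * I)
  have hsin (k : ℕ) : 2 * I * Complex.sin (k * θ) = w ^ k - v ^ k := by
    rw [two_mul_I_mul_sin, ← Complex.exp_nat_mul, ← Complex.exp_nat_mul]; ring_nf
  have hwv : w * v = 1 := by rw [← Complex.exp_add]; simp
  have h₁ := hsin 1
  have h₂ := hsin (m + 1)
  have h₃ := hsin (m + 2)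
  push_cast at h₁ h₂ h₃
  rw [one_mul] at h₁
  simp only [alternant, sinSum]
  push_cast
  linear_combination -(r ^ (m + 3) * h₂) + r ^ (m + 2) * s * h₃ - r * s ^ (m + 2) * h₁
    + r ^ (m + 3) * (w ^ (m + 1) - v ^ (m + 1)) * hwv

theorem alternant_exp_mul_I_zero_ne_zero {r θ : ℝ} (s : ℝ) (hr : r ≠ 0) (hθ : Real.sin θ ≠ 0) :
    alternant (r * exp (θ * I)) (r * exp (-θ * I)) (s : ℂ) 0 ≠ 0 := by
  have him (x : ℂ) (hx : x.im ≠ 0) : x ≠ 0 := fun h ↦ hx (by simp [h])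
  have hv : (exp (-(θ * I))).im = -Real.sin θ := by
    rw [show -((θ : ℂ) * I) = ((-θ : ℝ) : ℂ) * I by push_cast; ring, exp_ofReal_mul_I_im,
      Real.sin_neg]
  rw [alternant_zero]
  refine mul_ne_zero (mul_ne_zero (him _ ?_) (him _ ?_)) (him _ ?_) <;>
    simp [exp_ofReal_mul_I_im, hv, hr, hθ]

end

theorem sinSum_left (m j : ℕ) (r s : ℝ) :
    sinSum m r s (j * π / (m + 2)) =
      Real.sin (j * π / (m + 2)) * ((-1) ^ (j + 1) * r ^ (m + 2) + s ^ (m + 2)) := by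
  have h₂ : ((m : ℝ) + 2) * (j * π / (m + 2)) = j * π := by field_simp
  have h₁ : ((m : ℝ) + 1) * (j * π / (m + 2)) = j * π - j * π / (m + 2) := by field_simp; ring
  rw [sinSum, h₁, h₂, Real.sin_nat_mul_pi, Real.sin_nat_mul_pi_sub]
  ring

theorem sinSum_right (m j : ℕ) (r s : ℝ) :
    sinSum m r s (j * π / (m + 1)) =
      s * Real.sin (j * π / (m + 1)) * ((-1) ^ (j + 1) * r ^ (m + 1) + s ^ (m + 1)) := by
  have h₁ : ((m : ℝ) + 1) * (j * π / (m + 1)) = j * π := by field_simp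
  have h₂ : ((m : ℝ) + 2) * (j * π / (m + 1)) = j * π / (m + 1) + j * π := by field_simp; ring
  rw [sinSum, h₁, h₂, Real.sin_nat_mul_pi, Real.sin_add_nat_mul_pi]
  ring

theorem neg_one_pow_mul_pos {r s : ℝ} (hs : 0 < s) (hsr : s < -r) (j : ℕ) {n : ℕ} (hn : n ≠ 0) :
    0 < (-1) ^ (j + n + 1) * ((-1) ^ (j + 1) * r ^ n + s ^ n) := by
  have hε : ((-1 : ℝ) ^ (j + 1)) ^ 2 = 1 := by
    rw [← pow_mul]; exact Even.neg_one_pow ⟨j + 1, by ring⟩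
  have hsign : -1 ≤ (-1 : ℝ) ^ (j + n + 1) := by
    rcases neg_one_pow_eq_or ℝ (j + n + 1) with h | h <;> norm_num [h]
  calc 0 < (-r) ^ n - s ^ n := sub_pos.2 (pow_lt_pow_left₀ hsr hs.le hn)
    _ ≤ (-r) ^ n + (-1) ^ (j + n + 1) * s ^ n := by nlinarith [pow_pos hs n]
    _ = _ := by rw [neg_pow]; linear_combination -(-1) ^ n * r ^ n * hε

theorem Icc_window_subset {m j : ℕ} (hj : 1 ≤ j) (hjm : 3 * j ≤ m) :
    Icc (j * π / (m + 2)) (j * π / (m + 1)) ⊆ Ioo 0 (π / 3) := by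
  have hj' : (1 : ℝ) ≤ j := by exact_mod_cast hj
  have hjm' : 3 * (j : ℝ) ≤ m := by exact_mod_cast hjm
  refine fun θ hθ ↦ ⟨lt_of_lt_of_le (by positivity) hθ.1, hθ.2.trans_lt ?_⟩
  rw [div_lt_div_iff₀ (by positivity) (by norm_num)]
  nlinarith [pi_pos]

theorem window_lt_window {m j j' : ℕ} (hjj' : j < j') (hjm : j ≤ m) :
    j * π / (m + 1) < j' * π / (m + 2) := by
  have h : (j : ℝ) * (m + 2) < j' * (m + 1) := by
    exact_mod_cast (by nlinarith : j * (m + 2) < j' * (m + 1))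
  rw [div_lt_div_iff₀ (by positivity) (by positivity)]
  nlinarith [pi_pos]

theorem exists_sinSum_eq_zero {m j : ℕ} (hj : 1 ≤ j) (hjm : 3 * j ≤ m) :
    ∃ θ ∈ Icc (j * π / (m + 2)) (j * π / (m + 1)),
      sinSum m (rParam (cos θ)) (sParam (cos θ)) θ = 0 := by
  set A := j * π / (m + 2)
  set B := j * π / (m + 1)
  set g := fun θ ↦ sinSum m (rParam (cos θ)) (sParam (cos θ)) θ
  have hwin := Icc_window_subset hj hjm
  have hAB : A ≤ B := div_le_div_of_nonneg_left (by positivity) (by positivity) (by linarith)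
  have hcont : ContinuousOn g (Icc A B) := by
    have hD : ∀ θ ∈ Icc A B, 4 * cos θ ^ 2 - 1 ≠ 0 := fun θ hθ ↦
      (four_mul_sq_sub_one_pos (half_lt_cos (Ioo_subset_Ico_self (hwin hθ)))).ne'
    simp only [g, sinSum, rParam, sParam]
    fun_prop (disch := assumption)
  have hsign : g A * g B < 0 := by
    have hA := hwin ⟨le_rfl, hAB⟩
    have hB := hwin ⟨hAB, le_rfl⟩
    have hcA := half_lt_cos (Ioo_subset_Ico_self hA)
    have hcB := half_lt_cos (Ioo_subset_Ico_self hB)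
    have hsinA := sin_pos_of_pos_of_lt_pi hA.1 (by linarith [hA.2, pi_pos])
    have hsinB := sin_pos_of_pos_of_lt_pi hB.1 (by linarith [hB.2, pi_pos])
    set XA := (-1) ^ (j + 1) * rParam (cos A) ^ (m + 2) + sParam (cos A) ^ (m + 2)
    set XB := (-1) ^ (j + 1) * rParam (cos B) ^ (m + 1) + sParam (cos B) ^ (m + 1)
    have hX : XA * XB < 0 := by
      have pA := neg_one_pow_mul_pos (sParam_pos hcA) (sParam_lt_neg_rParam hcA) j
        (n := m + 2) (by omega)
      have pB := neg_one_pow_mul_pos (sParam_pos hcB) (sParam_lt_neg_rParam hcB) j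
        (n := m + 1) (by omega)
      have hodd : (-1 : ℝ) ^ (j + (m + 2) + 1) * (-1) ^ (j + (m + 1) + 1) = -1 := by
        rw [← pow_add]; exact Odd.neg_one_pow ⟨j + m + 2, by ring⟩
      nlinarith [mul_pos pA pB]
    calc g A * g B = (sin A * sin B * sParam (cos B)) * (XA * XB) := by
          rw [show g A = sin A * XA from sinSum_left m j _ _,
            show g B = sParam (cos B) * sin B * XB from sinSum_right m j _ _]
          ring
      _ < 0 := mul_neg_of_pos_of_neg (by have := sParam_pos hcB; positivity) hX
  have h0 : (0 : ℝ) ∈ uIcc (g A) (g B) := by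
    rcases mul_neg_iff.1 hsign with h | h
    · exact mem_uIcc.2 (Or.inr ⟨h.2.le, h.1.le⟩)
    · exact mem_uIcc.2 (Or.inl ⟨h.1.le, h.2.le⟩)
  rw [← uIcc_of_le hAB] at hcont ⊢
  exact intermediate_value_uIcc hcont h0

theorem exists_strictMono_sinSum_zeros (m : ℕ) :
    ∃ t : Fin (m / 3) → ℝ, StrictMono t ∧
      ∀ i, t i ∈ Ioo 0 (π / 3) ∧ sinSum m (rParam (cos (t i))) (sParam (cos (t i))) (t i) = 0 := by
  choose t ht hzero using fun i : Fin (m / 3) ↦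
    exists_sinSum_eq_zero (m := m) (j := i + 1) (by omega) (by omega)
  refine ⟨t, fun i i' hii' ↦ ?_,
    fun i ↦ ⟨Icc_window_subset (by omega) (by omega) (ht i), hzero i⟩⟩
  calc t i ≤ _ := (ht i).2
    _ < _ := window_lt_window (by simpa using hii') (by omega)
    _ ≤ t i' := (ht i').1

theorem IsJSequence.eval_zParam_cos_eq_zero {J : ℕ → ℂ[X]} (hJ : IsJSequence J) {m : ℕ} {θ : ℝ}
    (hθ : θ ∈ Ioo 0 (π / 3)) (hzero : sinSum m (rParam (cos θ)) (sParam (cos θ)) θ = 0) :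
    (J m).eval (zParam (cos θ) : ℂ) = 0 := by
  have hc := half_lt_cos (Ioo_subset_Ico_self hθ)
  set c := cos θ
  set r := rParam c
  set s := sParam c
  have hD := (four_mul_sq_sub_one_pos hc).ne'
  have hroot (x : ℂ) (hx : x ^ 2 - 2 * r * c * x + r ^ 2 = 0) :
      x ^ 3 + x ^ 2 + zParam c = 0 := by
    rw [cubic_eq_mul_quadratic hD, hx, mul_zero]
  have hcos : 2 * (c : ℂ) = Complex.exp (θ * Complex.I) + Complex.exp (-θ * Complex.I) := by
    rw [Complex.ofReal_cos, Complex.two_cos]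
  have hwv : Complex.exp (θ * Complex.I) * Complex.exp (-θ * Complex.I) = 1 := by
    rw [← Complex.exp_add]; simp
  have h₁ := hroot (r * Complex.exp (θ * Complex.I)) (by
    linear_combination -(r ^ 2 * Complex.exp (θ * Complex.I)) * hcos - r ^ 2 * hwv)
  have h₂ := hroot (r * Complex.exp (-θ * Complex.I)) (by
    linear_combination -(r ^ 2 * Complex.exp (-θ * Complex.I)) * hcos - r ^ 2 * hwv)
  have h₃ : (s : ℂ) ^ 3 + (s : ℂ) ^ 2 + zParam c = 0 := by
    rw [cubic_eq_mul_quadratic hD, sub_self, zero_mul]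
  have hW := hJ.eval_mul_alternant h₁ h₂ h₃ m
  rw [alternant_exp_mul_I m, hzero, Complex.ofReal_zero, mul_zero] at hW
  have hsin : sin θ ≠ 0 := (sin_pos_of_pos_of_lt_pi hθ.1 (by linarith [hθ.2, pi_pos])).ne'
  exact (mul_eq_zero.1 hW).resolve_right
    (alternant_exp_mul_I_zero_ne_zero s (rParam_neg hc).ne hsin)

/-- If `J_0 = 1`, `J_1 = -1`, `J_2 = 1`, and `J_m = -J_{m-1} - X·J_{m-3}` (the
polynomials generated by `1/(1+t+zt³)`), then every zero of `J_m` is a real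
number in `(-∞, -4/27)`. -/
theorem stmt_7 (J : ℕ → Polynomial ℂ)
    (h0 : J 0 = 1) (h1 : J 1 = -1) (h2 : J 2 = 1)
    (hrec : ∀ m : ℕ, J (m + 3) = -J (m + 2) - Polynomial.X * J m) :
    ∀ m : ℕ, ∀ z : ℂ, (J m).eval z = 0 → ∃ x : ℝ, x < -4 / 27 ∧ z = (x : ℂ) := by
  intro m z hz
  have hJ : IsJSequence J := ⟨h0, h1, h2, hrec⟩
  obtain ⟨t, ht_mono, ht⟩ := exists_strictMono_sinSum_zeros m
  have hinj : Injective fun i ↦ (zParam (cos (t i)) : ℂ) := fun i i' h ↦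
    ht_mono.injective <| strictAntiOn_zParam_cos.injOn (Ioo_subset_Ico_self (ht i).1)
      (Ioo_subset_Ico_self (ht i').1) (Complex.ofReal_injective h)
  obtain ⟨i, rfl⟩ := mem_range_of_natDegree_le_card (hJ.ne_zero m) hinj
    (fun i ↦ hJ.eval_zParam_cos_eq_zero (ht i).1 (ht i).2) (by simpa using hJ.natDegree_le m) hz
  exact ⟨_, zParam_cos_lt (ht i).1, rfl⟩
end

section
/- For θ ∈ (2π/3, π), define r = (1−4cos²θ)/(2cos θ), q = −2cos θ, z = −1/(r³q), t_1 = re^{iθ}, t_2 = re^{−iθ}, t_3 = rq. Then t_1, t_2, t_3 are distinct, nonzero, and 1 + t + z t³ = z(t−t_1)(t−t_2)(t−t_3) for all complex t. -/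
open Real

/-!
Since `q = -2 cos θ`, the numbers `t₁ = r e^{iθ}` and `t₂ = r e^{-iθ}` are the roots of
`t² + q r t + r²`, so `t₁ + t₂ + t₃ = 0`, `t₁t₂ + t₁t₃ + t₂t₃ = r² (1 - q²)` and `t₁t₂t₃ = r³q`.
The choice of `r` is exactly the relation `r q = q² - 1`, which turns the second symmetric function
into `-r³q = 1/z`; the factorization is then Vieta's formulas. For `θ ∈ (2π/3, π)` we have
`cos θ ∈ (-1, -1/2)`, so `r, q > 0` and `sin θ > 0`: `t₁, t₂` are non-real conjugates and `t₃`
is a nonzero real number.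
-/

theorem one_add_add_mul_pow_three_eq_of_vieta {R : Type*} [CommRing R] {z t₁ t₂ t₃ : R}
    (h_sum : t₁ + t₂ + t₃ = 0) (h_pair : z * (t₁ * t₂ + t₁ * t₃ + t₂ * t₃) = 1)
    (h_prod : z * (t₁ * t₂ * t₃) = -1) (t : R) :
    1 + t + z * t ^ 3 = z * (t - t₁) * (t - t₂) * (t - t₃) := by
  linear_combination z * t ^ 2 * h_sum - t * h_pair + h_prod

namespace Real

theorem cos_lt_neg_half_of_mem_Ioo {θ : ℝ} (hθ : θ ∈ Set.Ioo (2 * π / 3) π) :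
    cos θ < -(1 / 2) := by
  have h : cos (2 * π / 3) = -(1 / 2) := by
    rw [show 2 * π / 3 = π - π / 3 by ring, cos_pi_sub, cos_pi_div_three]
  rw [← h]
  exact cos_lt_cos_of_nonneg_of_le_pi (by positivity) hθ.2.le hθ.1

end Real

namespace Complex

theorem exp_neg_ofReal_mul_I_im (θ : ℝ) : (exp (-θ * I)).im = -Real.sin θ := by
  rw [← ofReal_neg, exp_ofReal_mul_I_im, Real.sin_neg]

theorem one_add_add_mul_pow_three_eq_of_two_cos_eq {r q θ : ℝ} (hr : r ≠ 0) (hq : q ≠ 0)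
    (hrq : r * q = q ^ 2 - 1) (hθ : 2 * Real.cos θ = -q) (t : ℂ) :
    1 + t + ((-1 / (r ^ 3 * q) : ℝ) : ℂ) * t ^ 3 =
      ((-1 / (r ^ 3 * q) : ℝ) : ℂ) * (t - r * exp (θ * I)) * (t - r * exp (-θ * I)) *
        (t - r * q) := by
  have hsum : r * exp (θ * I) + r * exp (-θ * I) = -(r * q : ℂ) := by
    rw [← mul_add, ← two_cos, ← ofReal_cos]
    exact_mod_cast by linear_combination r * hθ
  have hprod : r * exp (θ * I) * (r * exp (-θ * I)) = (r : ℂ) ^ 2 := by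
    rw [mul_mul_mul_comm, ← exp_add, ← add_mul, add_neg_cancel, zero_mul, exp_zero, mul_one, sq]
  have hrq' : (r * q : ℂ) = q ^ 2 - 1 := by exact_mod_cast hrq
  have hrq₃ : (r : ℂ) ^ 3 * q ≠ 0 := by simp [hr, hq]
  apply one_add_add_mul_pow_three_eq_of_vieta <;> push_cast
  · linear_combination hsum
  · rw [div_mul_eq_mul_div, div_eq_iff hrq₃]
    linear_combination -hprod - r * q * hsum - r ^ 2 * hrq'
  · rw [div_mul_eq_mul_div, div_eq_iff hrq₃]
    linear_combination -(r * q) * hprod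

end Complex

open Complex in
/-- For `θ ∈ (2π/3, π)`, with `r = (1-4cos²θ)/(2cos θ)`, `q = -2cos θ`,
`z = -1/(r³q)`, `t₁ = re^{iθ}`, `t₂ = re^{-iθ}`, `t₃ = rq`: the numbers
`t₁, t₂, t₃` are distinct and nonzero, and `1 + t + z t³ = z(t-t₁)(t-t₂)(t-t₃)`
for all complex `t`. -/
theorem stmt_8 (θ : ℝ) (hθ : θ ∈ Set.Ioo (2 * π / 3) π) :
    let r : ℝ := (1 - 4 * Real.cos θ ^ 2) / (2 * Real.cos θ)
    let q : ℝ := -2 * Real.cos θ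
    let z : ℝ := -1 / (r ^ 3 * q)
    let t₁ : ℂ := (r : ℂ) * Complex.exp (θ * Complex.I)
    let t₂ : ℂ := (r : ℂ) * Complex.exp (-θ * Complex.I)
    let t₃ : ℂ := (r : ℂ) * (q : ℂ)
    t₁ ≠ t₂ ∧ t₁ ≠ t₃ ∧ t₂ ≠ t₃ ∧ t₁ ≠ 0 ∧ t₂ ≠ 0 ∧ t₃ ≠ 0 ∧
    ∀ t : ℂ, 1 + t + (z : ℂ) * t ^ 3 = (z : ℂ) * (t - t₁) * (t - t₂) * (t - t₃) := by
  intro r q z t₁ t₂ t₃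
  have hc := Real.cos_lt_neg_half_of_mem_Ioo hθ
  have hs : 0 < Real.sin θ := Real.sin_pos_of_pos_of_lt_pi (by linarith [hθ.1, pi_pos]) hθ.2
  have hr : 0 < r := div_pos_of_neg_of_neg (by nlinarith) (by linarith)
  have hq : 0 < q := by linarith
  have hrq : r * q = q ^ 2 - 1 := by
    have hc₀ : Real.cos θ ≠ 0 := (hc.trans (by norm_num)).ne
    simp only [r, q]
    field_simp
    ring
  have hrs : 0 < r * Real.sin θ := mul_pos hr hs
  have him₁ : t₁.im = r * Real.sin θ := by rw [im_ofReal_mul, exp_ofReal_mul_I_im]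
  have him₂ : t₂.im = -(r * Real.sin θ) := by
    rw [im_ofReal_mul, exp_neg_ofReal_mul_I_im, mul_neg]
  have him₃ : t₃.im = 0 := by rw [im_ofReal_mul, ofReal_im, mul_zero]
  refine ⟨?_, ?_, ?_, ?_, ?_, ?_, ?_⟩
  · exact ne_of_apply_ne im (by rw [him₁, him₂]; linarith)
  · exact ne_of_apply_ne im (by rw [him₁, him₃]; linarith)
  · exact ne_of_apply_ne im (by rw [him₂, him₃]; linarith)
  · exact ne_of_apply_ne im (by rw [him₁, zero_im]; linarith)
  · exact ne_of_apply_ne im (by rw [him₂, zero_im]; linarith)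
  · exact mul_ne_zero (ofReal_ne_zero.2 hr.ne') (ofReal_ne_zero.2 hq.ne')
  · exact one_add_add_mul_pow_three_eq_of_two_cos_eq hr.ne' hq.ne' hrq (by ring)
end

section
/- Let a, b, c be real numbers with c ≠ 0, and let {P_m(z)} be the coefficient sequence of the power series expansion of 1/((at²+bt+c)(1−zt)) in t. Then each P_m(z) is a polynomial in z, with P_0 = 1/c, P_1 = −(b−cz)/c², P_2 = (b−cz)²/c³ − (a−bz)/c², and for m ≥ 3, P_m(z) = (1/c)(az P_{m−3}(z) − (a−bz)P_{m−2}(z) − (b−cz)P_{m−1}(z)). -/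
/-!
Multiplying the series `∑ P_m(z) tᵐ` by `(at² + bt + c)(1 - zt) = c + (b - cz) t + (a - bz) t² - az t³`
gives the constant series `1` near `t = 0`, so by uniqueness of power-series coefficients the
convolution of `(P_m(z))` with these four coefficients is `1, 0, 0, …`. Solving for `P_m(z)` gives
the initial values and the recurrence, and since the coefficient `c` of `P_m(z)` in it does not depend on `z`,
induction on `m` shows that every `P_m` is a polynomial in `z`.
-/

open Filter Topology Finset Polynomial

section Convolution

variable {α : Type*} [CommSemiring α] [TopologicalSpace α] [IsTopologicalSemiring α]

def polyMulCoeff (d : ℕ → α) (n : ℕ) (f : ℕ → α) (m : ℕ) : α :=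
  ∑ i ∈ range (n + 1), if i ≤ m then d i * f (m - i) else 0

theorem HasSum.shift_mul_pow {f : ℕ → α} {t S : α} (k : ℕ)
    (h : HasSum (fun m => f m * t ^ m) S) :
    HasSum (fun m => (if k ≤ m then f (m - k) else 0) * t ^ m) (t ^ k * S) := by
  rw [← (add_left_injective k).hasSum_iff]
  · refine (h.mul_left (t ^ k)).congr_fun fun m => ?_
    simp only [Function.comp, Nat.le_add_left, if_true, Nat.add_sub_cancel, pow_add]
    ring
  · intro m hm
    have : ¬ k ≤ m := fun hkm => hm ⟨m - k, Nat.sub_add_cancel hkm⟩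
    simp [this]

theorem HasSum.polyMulCoeff_mul_pow {f : ℕ → α} {t S : α} (d : ℕ → α) (n : ℕ)
    (h : HasSum (fun m => f m * t ^ m) S) :
    HasSum (fun m => polyMulCoeff d n f m * t ^ m) ((∑ i ∈ range (n + 1), d i * t ^ i) * S) := by
  simp only [sum_mul, mul_assoc]
  refine (hasSum_sum fun i _ => (h.shift_mul_pow i).mul_left (d i)).congr_fun fun m => ?_
  rw [polyMulCoeff, sum_mul]
  refine sum_congr rfl fun i _ => ?_
  split_ifs <;> ring

end Convolution

section NormedField

variable {𝕜 : Type*} [NontriviallyNormedField 𝕜]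

theorem eq_zero_of_eventually_hasSum_mul_pow_zero {R : ℕ → 𝕜}
    (h : ∀ᶠ t in 𝓝 0, HasSum (fun m => R m * t ^ m) 0) : R = 0 := by
  obtain ⟨ε, hε, hball⟩ := Metric.eventually_nhds_iff.mp h
  obtain ⟨x, hx0, hxε⟩ := NormedField.exists_norm_lt 𝕜 hε
  have hx := hball (by simpa using hxε)
  set p := FormalMultilinearSeries.ofScalars 𝕜 R
  have hrad : (‖x‖₊ : ENNReal) ≤ p.radius := by
    refine p.le_radius_of_tendsto (l := 0) ?_
    simpa [p, FormalMultilinearSeries.ofScalars_norm, norm_mul, norm_pow] using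
      hx.summable.tendsto_atTop_zero.norm
  have hp : HasFPowerSeriesAt (0 : 𝕜 → 𝕜) p 0 := by
    refine ⟨_, hrad, by simpa using hx0, fun {y} hy => ?_⟩
    have hy : ‖y‖ < ‖x‖ := by simpa using hy
    simpa [p, FormalMultilinearSeries.ofScalars_apply_eq, mul_comm] using
      hball (by simpa using hy.trans hxε)
  exact (FormalMultilinearSeries.ofScalars_series_eq_zero 𝕜).mp hp.eq_zero

theorem polyMulCoeff_eq_of_eventually_hasSum_inv {f d : ℕ → 𝕜} {n : ℕ} (hd : d 0 ≠ 0)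
    (h : ∀ᶠ t in 𝓝 0, HasSum (fun m => f m * t ^ m) (∑ i ∈ range (n + 1), d i * t ^ i)⁻¹)
    (m : ℕ) : polyMulCoeff d n f m = if m = 0 then 1 else 0 := by
  have hq : ∀ᶠ t in 𝓝 (0 : 𝕜), ∑ i ∈ range (n + 1), d i * t ^ i ≠ 0 :=
    (by fun_prop : Continuous fun t : 𝕜 => ∑ i ∈ range (n + 1), d i * t ^ i).continuousAt
      |>.eventually_ne (by simpa [sum_range_succ'] using hd)
  have h0 : ∀ᶠ t in 𝓝 (0 : 𝕜), HasSum
      (fun m => (polyMulCoeff d n f m - if m = 0 then 1 else 0) * t ^ m) 0 := by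
    filter_upwards [h, hq] with t ht htq
    have := (ht.polyMulCoeff_mul_pow d n).sub (hasSum_ite_eq 0 1)
    rw [mul_inv_cancel₀ htq, sub_self] at this
    refine this.congr_fun fun m => ?_
    split_ifs with hm <;> simp [hm]
  exact sub_eq_zero.mp (congr_fun (eq_zero_of_eventually_hasSum_mul_pow_zero h0) m)

end NormedField

section Polynomiality

variable {K : Type*} [Field K]

theorem exists_eval_eq_of_polyMulCoeff_eq {f : ℕ → K → K} {d : ℕ → K[X]} {n : ℕ} {c : K}
    (hc : c ≠ 0) (hd0 : d 0 = C c)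
    (h : ∀ z m, polyMulCoeff (fun i => (d i).eval z) n (fun k => f k z) m = if m = 0 then 1 else 0)
    (m : ℕ) : ∃ p : K[X], ∀ z, f m z = p.eval z := by
  suffices f m ∈ (aeval (id : K → K)).range by
    obtain ⟨p, hp⟩ := this
    exact ⟨p, fun z => by simp [← hp, aeval_fn_apply]⟩
  induction m using Nat.strong_induction_on with
  | _ m ih =>
  have hrec : f m = c⁻¹ • ((if m = 0 then 1 else 0) -
      ∑ i ∈ range n, if i + 1 ≤ m then aeval id (d (i + 1)) * f (m - (i + 1)) else 0) := by
    funext z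
    have hz := h z m
    simp only [polyMulCoeff, sum_range_succ', hd0, eval_C, Nat.zero_le, if_true,
      Nat.sub_zero] at hz
    simp only [Pi.smul_apply, Pi.sub_apply, Finset.sum_apply, smul_eq_mul,
      apply_ite (fun g : K → K => g z), Pi.one_apply, Pi.zero_apply, Pi.mul_apply,
      aeval_fn_apply, id, coe_aeval_eq_eval]
    rw [← hz]
    field_simp
    ring
  rw [hrec]
  refine Subalgebra.smul_mem _ (sub_mem ?_ (sum_mem fun i hi => ?_)) _
  · split_ifs
    exacts [one_mem _, zero_mem _]
  · split_ifs
    exacts [mul_mem ⟨_, rfl⟩ (ih _ (by omega)), zero_mem _]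

end Polynomiality

section Denominator

variable {K : Type*} [Field K]

noncomputable def denomCoeff (a b c : K) : ℕ → K[X]
  | 0 => C c
  | 1 => C b - C c * X
  | 2 => C a - C b * X
  | 3 => -(C a * X)
  | _ => 0

theorem sum_denomCoeff_mul_pow (a b c z t : K) :
    ∑ i ∈ range 4, (denomCoeff a b c i).eval z * t ^ i = (a * t ^ 2 + b * t + c) * (1 - z * t) := by
  simp only [denomCoeff, sum_range_succ, sum_range_zero, eval_C, eval_sub, eval_mul, eval_X,
    eval_neg]
  ring

theorem initial_values_and_recurrence_of_polyMulCoeff_denomCoeff {a b c z : K} {f : ℕ → K}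
    (hc : c ≠ 0)
    (hf : ∀ m, polyMulCoeff (fun i => (denomCoeff a b c i).eval z) 3 f m = if m = 0 then 1 else 0) :
    f 0 = 1 / c ∧ f 1 = -(b - c * z) / c ^ 2 ∧
    f 2 = (b - c * z) ^ 2 / c ^ 3 - (a - b * z) / c ^ 2 ∧
    ∀ k, f (k + 3) = 1 / c * (a * z * f k - (a - b * z) * f (k + 1) - (b - c * z) * f (k + 2)) := by
  have e0 := hf 0
  have e1 := hf 1
  have e2 := hf 2
  have e3 (k : ℕ) := hf (k + 3)
  simp only [polyMulCoeff, denomCoeff, sum_range_succ, sum_range_zero, zero_add, add_zero,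
    zero_le, Nat.le_add_left, Nat.reduceLeDiff, Nat.reduceSubDiff, Nat.sub_self, Nat.reduceEqDiff,
    Nat.add_eq_zero_iff, OfNat.ofNat_ne_zero, and_false, reduceIte,
    eval_C, eval_sub, eval_mul, eval_X, eval_neg] at e0 e1 e2 e3
  have h0 : f 0 = 1 / c := by
    field_simp
    linear_combination e0
  have h1 : f 1 = -(b - c * z) / c ^ 2 := by
    rw [h0] at e1
    field_simp at e1 ⊢
    linear_combination e1
  refine ⟨h0, h1, ?_, fun k => ?_⟩
  · rw [h0, h1] at e2
    field_simp at e2 ⊢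
    linear_combination e2
  · field_simp
    linear_combination e3 k

end Denominator

/-- If `c ≠ 0` and `{P_m}` is the coefficient sequence of the power-series
expansion of `1/((at²+bt+c)(1-zt))` in `t`, then each `P_m` is a polynomial
in `z` with the stated initial values and three-term recurrence. -/
theorem stmt_10 (a b c : ℝ) (hc : c ≠ 0) (P : ℕ → ℂ → ℂ)
    (hP : ∀ z : ℂ, ∃ ε > 0, ∀ t : ℂ, ‖t‖ < ε →
      HasSum (fun m => P m z * t ^ m)
        ((((a : ℂ) * t ^ 2 + (b : ℂ) * t + (c : ℂ)) * (1 - z * t))⁻¹)) :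
    (∀ m : ℕ, ∃ p : Polynomial ℂ, ∀ z : ℂ, P m z = p.eval z) ∧
    (∀ z : ℂ, P 0 z = 1 / (c : ℂ)) ∧
    (∀ z : ℂ, P 1 z = -((b : ℂ) - (c : ℂ) * z) / (c : ℂ) ^ 2) ∧
    (∀ z : ℂ, P 2 z = ((b : ℂ) - (c : ℂ) * z) ^ 2 / (c : ℂ) ^ 3
      - ((a : ℂ) - (b : ℂ) * z) / (c : ℂ) ^ 2) ∧
    (∀ m : ℕ, 3 ≤ m → ∀ z : ℂ, P m z = (1 / (c : ℂ)) *
      ((a : ℂ) * z * P (m - 3) z - ((a : ℂ) - (b : ℂ) * z) * P (m - 2) z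
        - ((b : ℂ) - (c : ℂ) * z) * P (m - 1) z)) := by
  have hc' : (c : ℂ) ≠ 0 := by exact_mod_cast hc
  have hconv (z : ℂ) (m : ℕ) : polyMulCoeff (fun i => (denomCoeff (a : ℂ) b c i).eval z) 3
      (fun k => P k z) m = if m = 0 then 1 else 0 := by
    refine polyMulCoeff_eq_of_eventually_hasSum_inv (by simpa [denomCoeff] using hc') ?_ m
    obtain ⟨ε, hε, h⟩ := hP z
    filter_upwards [Metric.ball_mem_nhds 0 hε] with t ht
    simpa [sum_denomCoeff_mul_pow] using h t (by simpa using ht)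
  have hvals (z : ℂ) := initial_values_and_recurrence_of_polyMulCoeff_denomCoeff hc' (hconv z)
  refine ⟨exists_eval_eq_of_polyMulCoeff_eq hc' rfl hconv, fun z => (hvals z).1,
    fun z => (hvals z).2.1, fun z => (hvals z).2.2.1, fun m hm z => ?_⟩
  obtain ⟨k, rfl⟩ := Nat.exists_eq_add_of_le' hm
  simpa using (hvals z).2.2.2 k
end

section
/- Let a, b, c ∈ ℝ with ac < 0 and b ≠ 0, and let {P_m(z)} be generated by 1/((at²+bt+c)(1−tz)). Then for every m ≥ 0, all zeros of the polynomial P_m(z) lie in the closed disk {z : |z| ≤ 1/|α|}, where α is the root of at²+bt+c of smallest modulus. -/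
/-!
With `u = α⁻¹` and `v = β⁻¹` the reciprocals of the two roots, the generating function is
`c⁻¹ / ((1 - u t) (1 - v t) (1 - z t))`, so `c P_m(z)` is the complete homogeneous polynomial
`h_m(u, v, z)`, and `(u - v)(u - z)(v - z) h_m = u^(m+2) (v - z) - v^(m+2) (u - z) + z^(m+2) (u - v)`.
Since `ac < 0` the roots have opposite signs, and `|v| ≤ |u|` by the choice of `α`, so after
scaling `u = 1` we have `v = r ∈ [-1, 0]`.
A zero `w` with `|w| > 1` would then satisfy `w^(m+2) (1 - r) = (1 - r^(m+2)) w + (r^(m+2) - r)`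
with both coefficients on the right nonnegative, whence `|w|^(m+2) (1 - r) ≤ (1 - r) |w|`,
which is absurd.
-/

open Finset Filter Topology

section Coefficients

variable {R : Type*} [CommRing R]

/-- The coefficients of `F(t) / (1 - w t)` when `f` holds those of `F`. -/
def geomConv (f : ℕ → R) (w : R) (n : ℕ) : R :=
  ∑ k ∈ range (n + 1), f k * w ^ (n - k)

/-- `h_n(u, v, z) = ∑_{i+j+k=n} u^i v^j z^k`, the coefficients of `1 / ((1-ut)(1-vt)(1-zt))`. -/
def completeHomogeneous (u v z : R) (n : ℕ) : R :=
  geomConv (geomConv (u ^ ·) v) z n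

theorem mul_geomConv (c : R) (f : ℕ → R) (w : R) (n : ℕ) :
    c * geomConv f w n = geomConv (fun k => c * f k) w n := by
  simp only [geomConv, mul_sum, mul_assoc]

theorem geomConv_sub (f g : ℕ → R) (w : R) (n : ℕ) :
    geomConv (fun k => f k - g k) w n = geomConv f w n - geomConv g w n := by
  simp only [geomConv, sub_mul, sum_sub_distrib]

theorem geomConv_pow_mul_sub (x y : R) (n : ℕ) :
    geomConv (x ^ ·) y n * (x - y) = x ^ (n + 1) - y ^ (n + 1) := by
  simpa [geomConv] using geom_sum₂_mul x y (n + 1)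

theorem geomConv_pow_mul_geomConv (x : R) (f : ℕ → R) (w : R) (n : ℕ) :
    geomConv (fun k => x ^ k * f k) (x * w) n = x ^ n * geomConv f w n := by
  rw [geomConv, geomConv, mul_sum]
  refine sum_congr rfl fun k hk => ?_
  rw [mul_pow, ← pow_mul_pow_sub x (mem_range_succ_iff.1 hk)]
  ring

theorem completeHomogeneous_mul_left (x u v z : R) (n : ℕ) :
    completeHomogeneous (x * u) (x * v) (x * z) n = x ^ n * completeHomogeneous u v z n := by
  have hinner : geomConv (fun k => (x * u) ^ k) (x * v) = fun k => x ^ k * geomConv (u ^ ·) v k :=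
    funext fun k => by simpa only [mul_pow] using geomConv_pow_mul_geomConv x (u ^ ·) v k
  rw [completeHomogeneous, completeHomogeneous, hinner, geomConv_pow_mul_geomConv]

theorem completeHomogeneous_mul_sub (u v z : R) (n : ℕ) :
    (u - v) * (u - z) * (v - z) * completeHomogeneous u v z n =
      u ^ (n + 2) * (v - z) - v ^ (n + 2) * (u - z) + z ^ (n + 2) * (u - v) := by
  have hsplit : (u - v) * completeHomogeneous u v z n =
      u * geomConv (u ^ ·) z n - v * geomConv (v ^ ·) z n := by
    rw [completeHomogeneous, mul_geomConv, mul_geomConv, mul_geomConv, ← geomConv_sub]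
    congr 1
    ext k
    rw [mul_comm, geomConv_pow_mul_sub]
    ring
  linear_combination (u - z) * (v - z) * hsplit + u * (v - z) * geomConv_pow_mul_sub u z n
    - v * (u - z) * geomConv_pow_mul_sub v z n

end Coefficients

section PowerSeries

variable {𝕜 : Type*} [NontriviallyNormedField 𝕜]

theorem coeff_eq_of_eventually_hasSum {f g : ℕ → 𝕜} {F : 𝕜 → 𝕜}
    (hf : ∀ᶠ t in 𝓝 0, HasSum (fun n => f n * t ^ n) (F t))
    (hg : ∀ᶠ t in 𝓝 0, HasSum (fun n => g n * t ^ n) (F t)) : f = g := by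
  have hseries : ∀ {f : ℕ → 𝕜}, (∀ᶠ t in 𝓝 0, HasSum (fun n => f n * t ^ n) (F t)) →
      HasFPowerSeriesAt F (FormalMultilinearSeries.ofScalars 𝕜 f) 0 := fun h =>
    hasFPowerSeriesAt_iff.2 (by simpa only [FormalMultilinearSeries.coeff_ofScalars, smul_eq_mul,
      mul_comm, zero_add] using h)
  exact FormalMultilinearSeries.ofScalars_series_injective 𝕜 𝕜
    ((hseries hf).eq_formalMultilinearSeries (hseries hg))

variable [CompleteSpace 𝕜]

theorem hasSum_geomConv {f : ℕ → 𝕜} {t w A : 𝕜} (hf : HasSum (fun n => f n * t ^ n) A)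
    (hf' : Summable fun n => ‖f n * t ^ n‖) (hw : ‖w * t‖ < 1) :
    HasSum (fun n => geomConv f w n * t ^ n) (A * (1 - w * t)⁻¹) ∧
      Summable fun n => ‖geomConv f w n * t ^ n‖ := by
  have hterm : ∀ n, geomConv f w n * t ^ n =
      ∑ k ∈ range (n + 1), f k * t ^ k * (w * t) ^ (n - k) := fun n => by
    rw [geomConv, sum_mul]
    refine sum_congr rfl fun k hk => ?_
    rw [mul_pow, ← pow_mul_pow_sub t (mem_range_succ_iff.1 hk)]
    ring
  have hw' := summable_norm_geometric_of_norm_lt_one hw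
  simp only [hterm]
  refine ⟨?_, summable_norm_sum_mul_range_of_summable_norm hf' hw'⟩
  simpa only [hf.tsum_eq, tsum_geometric_of_norm_lt_one hw] using
    hasSum_sum_range_mul_of_summable_norm hf' hw'

theorem eventually_hasSum_completeHomogeneous (u v z : 𝕜) :
    ∀ᶠ t in 𝓝 0, HasSum (fun n => completeHomogeneous u v z n * t ^ n)
      ((1 - u * t) * (1 - v * t) * (1 - z * t))⁻¹ := by
  have hsmall : ∀ x : 𝕜, ∀ᶠ t in 𝓝 0, ‖x * t‖ < 1 := fun x =>
    (continuous_const.mul continuous_id).norm.continuousAt.eventually_lt continuousAt_const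
      (by simp)
  filter_upwards [hsmall u, hsmall v, hsmall z] with t hu hv hz
  have hgeom : HasSum (fun n => u ^ n * t ^ n) (1 - u * t)⁻¹ := by
    simpa only [mul_pow] using hasSum_geometric_of_norm_lt_one hu
  have hgeom' : Summable fun n => ‖u ^ n * t ^ n‖ := by
    simpa only [mul_pow] using summable_norm_geometric_of_norm_lt_one hu
  obtain ⟨huv, huv'⟩ := hasSum_geomConv hgeom hgeom' hv
  rw [mul_inv, mul_inv]
  exact (hasSum_geomConv huv huv' hz).1

end PowerSeries

theorem completeHomogeneous_one_ne_zero {r : ℝ} (hr : r ≤ 0) (hr' : -1 ≤ r) {w : ℂ}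
    (hw : 1 < ‖w‖) (n : ℕ) : completeHomogeneous 1 (r : ℂ) w n ≠ 0 := by
  intro h
  set s := r ^ (n + 2) with hs
  have hsr : |s| ≤ -r := by
    rw [hs, abs_pow, ← abs_of_nonpos hr]
    exact pow_le_of_le_one (abs_nonneg r) (abs_le.2 ⟨by linarith, by linarith⟩) (by omega)
  have hs1 : 0 ≤ 1 - s := by linarith [le_abs_self s]
  have hs2 : 0 ≤ s - r := by linarith [neg_abs_le s]
  have key : w ^ (n + 2) * ((1 - r : ℝ) : ℂ) = ((1 - s : ℝ) : ℂ) * w + ((s - r : ℝ) : ℂ) := by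
    rw [hs]
    push_cast
    linear_combination -(completeHomogeneous_mul_sub 1 (r : ℂ) w n) + (1 - r) * (1 - w) * (r - w) * h
  have hbound : ‖w‖ ^ (n + 2) * (1 - r) ≤ (1 - r) * ‖w‖ := calc
    ‖w‖ ^ (n + 2) * (1 - r) = ‖((1 - s : ℝ) : ℂ) * w + ((s - r : ℝ) : ℂ)‖ := by
      rw [← key, norm_mul, norm_pow, Complex.norm_real, Real.norm_of_nonneg (by linarith)]
    _ ≤ (1 - s) * ‖w‖ + (s - r) := by
      refine (norm_add_le _ _).trans_eq ?_
      rw [norm_mul, Complex.norm_real, Complex.norm_real, Real.norm_of_nonneg hs1,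
        Real.norm_of_nonneg hs2]
    _ ≤ (1 - r) * ‖w‖ := by nlinarith
  have hpow : ‖w‖ < ‖w‖ ^ (n + 2) := by
    simpa using pow_lt_pow_right₀ hw (by omega : 1 < n + 2)
  nlinarith

theorem completeHomogeneous_ne_zero {u v : ℝ} (hu : u ≠ 0) (huv : u * v ≤ 0) (hvu : |v| ≤ |u|)
    {z : ℂ} (hz : |u| < ‖z‖) (n : ℕ) : completeHomogeneous (u : ℂ) v z n ≠ 0 := by
  have hu' : (u : ℂ) ≠ 0 := Complex.ofReal_ne_zero.2 hu
  have hscale : completeHomogeneous (u : ℂ) v z n =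
      (u : ℂ) ^ n * completeHomogeneous 1 ((v / u : ℝ) : ℂ) (z / u) n := by
    rw [← completeHomogeneous_mul_left]
    push_cast
    field_simp
  have hr : v / u ≤ 0 := by
    rw [show v / u = u * v / u ^ 2 by field_simp]
    exact div_nonpos_of_nonpos_of_nonneg huv (sq_nonneg u)
  have hr' : -1 ≤ v / u := by
    refine (abs_le.1 ?_).1
    rwa [abs_div, div_le_one (abs_pos.2 hu)]
  have hw : 1 < ‖z / u‖ := by
    rw [norm_div, Complex.norm_real, Real.norm_eq_abs, one_lt_div (abs_pos.2 hu)]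
    exact hz
  rw [hscale]
  exact mul_ne_zero (pow_ne_zero n hu') (completeHomogeneous_one_ne_zero hr hr' hw n)

theorem exists_mul_eq_and_add_eq_of_root {K : Type*} [Field K] {a b c α : K} (ha : a ≠ 0)
    (hα : α ≠ 0) (hroot : a * α ^ 2 + b * α + c = 0) :
    ∃ β, a * α * β = c ∧ a * (α + β) = -b :=
  ⟨c / (a * α), by field_simp, by field_simp; linear_combination hroot⟩

theorem quadratic_eq_mul_one_sub_mul_one_sub {K : Type*} [Field K] {a b c α β : K} (hα : α ≠ 0)
    (hβ : β ≠ 0) (hc : a * α * β = c) (hb : a * (α + β) = -b) (t : K) :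
    a * t ^ 2 + b * t + c = c * ((1 - α⁻¹ * t) * (1 - β⁻¹ * t)) := by
  subst hc
  obtain rfl : b = -(a * (α + β)) := by linear_combination hb
  field_simp
  ring

theorem exists_other_root_of_mul_neg {a b c α : ℝ} (hac : a * c < 0)
    (hα : a * α ^ 2 + b * α + c = 0) :
    ∃ β, a * β ^ 2 + b * β + c = 0 ∧ α * β < 0 ∧
      ∀ t : ℂ, (a : ℂ) * t ^ 2 + b * t + c = c * ((1 - (α : ℂ)⁻¹ * t) * (1 - (β : ℂ)⁻¹ * t)) := by
  have ha : a ≠ 0 := by rintro rfl; simp at hac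
  have hc : c ≠ 0 := by rintro rfl; simp at hac
  have hα0 : α ≠ 0 := by rintro rfl; simp_all
  obtain ⟨β, hprod, hsum⟩ := exists_mul_eq_and_add_eq_of_root ha hα0 hα
  have hβ0 : β ≠ 0 := by rintro rfl; simp_all
  have hac' : a * c = a ^ 2 * (α * β) := by rw [← hprod]; ring
  refine ⟨β, by linear_combination β * hsum - hprod,
    neg_of_mul_neg_right (hac' ▸ hac) (sq_nonneg a), fun t => ?_⟩
  exact quadratic_eq_mul_one_sub_mul_one_sub (Complex.ofReal_ne_zero.2 hα0)
    (Complex.ofReal_ne_zero.2 hβ0) (by exact_mod_cast hprod) (by exact_mod_cast hsum) t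

theorem stmt_14_general (a b c : ℝ) (hac : a * c < 0)
    (α : ℝ) (hα : a * α ^ 2 + b * α + c = 0)
    (hmin : ∀ β : ℝ, a * β ^ 2 + b * β + c = 0 → |α| ≤ |β|)
    (P : ℕ → ℂ → ℂ)
    (hP : ∀ z : ℂ, ∃ ε > 0, ∀ t : ℂ, ‖t‖ < ε →
      HasSum (fun m => P m z * t ^ m)
        ((((a : ℂ) * t ^ 2 + (b : ℂ) * t + (c : ℂ)) * (1 - t * z))⁻¹)) :
    ∀ m : ℕ, ∀ z : ℂ, P m z = 0 → ‖z‖ ≤ 1 / |α| := by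
  have hc : c ≠ 0 := by rintro rfl; simp at hac
  obtain ⟨β, hβ, hαβ, hfactor⟩ := exists_other_root_of_mul_neg hac hα
  have hα0 : α ≠ 0 := left_ne_zero_of_mul hαβ.ne
  intro m z hPz
  by_contra! hz
  obtain ⟨ε, hε, hPsum⟩ := hP z
  have hcoeff : (fun n => P n z) =
      fun n => (c : ℂ)⁻¹ * completeHomogeneous ((α⁻¹ : ℝ) : ℂ) (β⁻¹ : ℝ) z n := by
    refine coeff_eq_of_eventually_hasSum
      (Metric.eventually_nhds_iff.2 ⟨ε, hε, fun {t} ht => hPsum t (by simpa using ht)⟩) ?_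
    filter_upwards [eventually_hasSum_completeHomogeneous ((α⁻¹ : ℝ) : ℂ) (β⁻¹ : ℝ) z] with t ht
    rw [hfactor, mul_comm t z, mul_assoc, mul_inv]
    simpa only [mul_assoc, Complex.ofReal_inv] using ht.mul_left (c : ℂ)⁻¹
  refine completeHomogeneous_ne_zero (v := β⁻¹) (z := z) (inv_ne_zero hα0) ?_ ?_ ?_ m ?_
  · rw [← mul_inv]
    exact (inv_lt_zero.2 hαβ).le
  · rw [abs_inv, abs_inv]
    exact inv_anti₀ (abs_pos.2 hα0) (hmin β hβ)
  · rwa [abs_inv, ← one_div]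
  · simpa [hPz, hc] using (congrFun hcoeff m).symm

/-- If `ac < 0`, `b ≠ 0`, `{P_m}` is generated by `1/((at²+bt+c)(1-tz))`, and
`α` is the (real) root of `at²+bt+c` of smallest modulus, then every zero of
`P_m` lies in the closed disk of radius `1/|α|`. -/
theorem stmt_14 (a b c : ℝ) (hac : a * c < 0) (hb : b ≠ 0)
    (α : ℝ) (hα : a * α ^ 2 + b * α + c = 0)
    (hmin : ∀ β : ℝ, a * β ^ 2 + b * β + c = 0 → |α| ≤ |β|)
    (P : ℕ → ℂ → ℂ)
    (hP : ∀ z : ℂ, ∃ ε > 0, ∀ t : ℂ, ‖t‖ < ε →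
      HasSum (fun m => P m z * t ^ m)
        ((((a : ℂ) * t ^ 2 + (b : ℂ) * t + (c : ℂ)) * (1 - t * z))⁻¹)) :
    ∀ m : ℕ, ∀ z : ℂ, P m z = 0 → ‖z‖ ≤ 1 / |α| :=
  stmt_14_general a b c hac α hα hmin P hP
end

section
/- Eneström–Kakeya: if p(z) = Σ_{k=0}^{m} a_k z^k has real positive coefficients, then all zeros of p lie in the annulus r ≤ |z| ≤ R, where r = min_{0≤k≤m−1} a_k/a_{k+1} and R = max_{0≤k≤m−1} a_k/a_{k+1}. -/
/-!
Multiplying by `z - 1` turns `∑ bₖ zᵏ = 0` into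
`b_m z^{m+1} = b₀ + ∑ (b_{k+1} - b_k) z^{k+1}`. For increasing nonnegative coefficients all
coefficients on the right are nonnegative and sum to `b_m`, so the triangle inequality forbids
`|z| > 1`; for decreasing ones the same identity, read as an expression for `b₀`, forbids `|z| < 1`.
Rescaling `z ↦ z / R` makes the coefficients `aₖ Rᵏ` monotone exactly when every ratio
`aₖ / a_{k+1}` is on the appropriate side of `R`.
-/

open Finset

theorem sub_one_mul_sum_range_mul_pow {R : Type*} [CommRing R] (b : ℕ → R) (z : R) (m : ℕ) :
    (z - 1) * ∑ k ∈ range (m + 1), b k * z ^ k =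
      b m * z ^ (m + 1) - b 0 - ∑ k ∈ range m, (b (k + 1) - b k) * z ^ (k + 1) := by
  induction m with
  | zero => simp only [zero_add, range_one, sum_singleton, range_zero, sum_empty]; ring
  | succ m ih => rw [sum_range_succ, mul_add, ih, sum_range_succ]; ring

theorem norm_sum_ofReal_mul_pow_le {ι : Type*} (s : Finset ι) (c : ι → ℝ) (e : ι → ℕ)
    (hc : ∀ i ∈ s, 0 ≤ c i) (z : ℂ) :
    ‖∑ i ∈ s, (c i : ℂ) * z ^ e i‖ ≤ ∑ i ∈ s, c i * ‖z‖ ^ e i :=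
  (norm_sum_le _ _).trans <| sum_le_sum fun i hi => by
    rw [norm_mul, norm_pow, Complex.norm_real, Real.norm_of_nonneg (hc i hi)]

section RootBounds

variable {m : ℕ} {b : ℕ → ℝ} {z : ℂ}

theorem norm_le_one_of_sum_eq_zero_of_monotone (h0 : 0 ≤ b 0) (hmono : ∀ k < m, b k ≤ b (k + 1))
    (hm : 0 < b m) (hz : ∑ k ∈ range (m + 1), (b k : ℂ) * z ^ k = 0) : ‖z‖ ≤ 1 := by
  by_contra! h
  have hid : (b m : ℂ) * z ^ (m + 1) =
      b 0 + ∑ k ∈ range m, ((b (k + 1) - b k : ℝ) : ℂ) * z ^ (k + 1) := by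
    push_cast
    linear_combination (z - 1) * hz - sub_one_mul_sum_range_mul_pow (fun k => (b k : ℂ)) z m
  have hdiff : ∀ k ∈ range m, 0 ≤ b (k + 1) - b k := fun k hk =>
    sub_nonneg.2 (hmono k (mem_range.1 hk))
  have := calc
    b m * ‖z‖ ^ (m + 1) = ‖(b m : ℂ) * z ^ (m + 1)‖ := by
        rw [norm_mul, norm_pow, Complex.norm_real, Real.norm_of_nonneg hm.le]
    _ ≤ b 0 + ∑ k ∈ range m, (b (k + 1) - b k) * ‖z‖ ^ (k + 1) := by
        rw [hid]
        refine (norm_add_le _ _).trans (add_le_add ?_ (norm_sum_ofReal_mul_pow_le _ _ _ hdiff z))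
        rw [Complex.norm_real, Real.norm_of_nonneg h0]
    _ ≤ b 0 * ‖z‖ ^ m + ∑ k ∈ range m, (b (k + 1) - b k) * ‖z‖ ^ m := by
        gcongr with k hk
        · exact le_mul_of_one_le_right h0 (one_le_pow₀ h.le)
        · exact hdiff k hk
        · exact h.le
        · exact mem_range.1 hk
    _ = b m * ‖z‖ ^ m := by rw [← sum_mul, sum_range_sub, ← add_mul, add_sub_cancel]
  have : ‖z‖ ^ (m + 1) ≤ ‖z‖ ^ m := le_of_mul_le_mul_left this hm
  exact (pow_lt_pow_right₀ h m.lt_succ_self).not_ge this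

theorem one_le_norm_of_sum_eq_zero_of_antitone (h0 : 0 < b 0) (hanti : ∀ k < m, b (k + 1) ≤ b k)
    (hm : 0 ≤ b m) (hz : ∑ k ∈ range (m + 1), (b k : ℂ) * z ^ k = 0) : 1 ≤ ‖z‖ := by
  by_contra! h
  have hid : (b 0 : ℂ) =
      b m * z ^ (m + 1) + ∑ k ∈ range m, ((b k - b (k + 1) : ℝ) : ℂ) * z ^ (k + 1) := by
    push_cast
    simp only [← neg_sub (b (_ + 1) : ℂ), neg_mul, sum_neg_distrib]
    linear_combination -(z - 1) * hz + sub_one_mul_sum_range_mul_pow (fun k => (b k : ℂ)) z m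
  have hdiff : ∀ k ∈ range m, 0 ≤ b k - b (k + 1) := fun k hk =>
    sub_nonneg.2 (hanti k (mem_range.1 hk))
  have := calc
    b 0 = ‖(b 0 : ℂ)‖ := by rw [Complex.norm_real, Real.norm_of_nonneg h0.le]
    _ ≤ b m * ‖z‖ ^ (m + 1) + ∑ k ∈ range m, (b k - b (k + 1)) * ‖z‖ ^ (k + 1) := by
        rw [hid]
        refine (norm_add_le _ _).trans (add_le_add ?_ (norm_sum_ofReal_mul_pow_le _ _ _ hdiff z))
        rw [norm_mul, norm_pow, Complex.norm_real, Real.norm_of_nonneg hm]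
    _ ≤ b m * ‖z‖ + ∑ k ∈ range m, (b k - b (k + 1)) * ‖z‖ := by
        gcongr with k hk
        · exact pow_le_of_le_one (norm_nonneg z) h.le m.succ_ne_zero
        · exact hdiff k hk
        · exact pow_le_of_le_one (norm_nonneg z) h.le k.succ_ne_zero
    _ = b 0 * ‖z‖ := by rw [← sum_mul, sum_range_sub', ← add_mul, add_sub_cancel]
  exact (mul_lt_of_lt_one_right h0 h).not_ge this

theorem sum_ofReal_mul_pow_div_eq {R : ℝ} (hR : R ≠ 0) (a : ℕ → ℝ) (n : ℕ) (z : ℂ) :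
    ∑ k ∈ range n, ((a k * R ^ k : ℝ) : ℂ) * (z / R) ^ k = ∑ k ∈ range n, (a k : ℂ) * z ^ k := by
  have hR' : (R : ℂ) ≠ 0 := by exact_mod_cast hR
  refine sum_congr rfl fun k _ => ?_
  push_cast
  rw [div_pow, mul_assoc, mul_div_cancel₀ _ (pow_ne_zero k hR')]

theorem norm_le_of_forall_le_mul {R : ℝ} (hR : 0 < R) {a : ℕ → ℝ} (h0 : 0 ≤ a 0) (hm : 0 < a m)
    (hratio : ∀ k < m, a k ≤ R * a (k + 1))
    (hz : ∑ k ∈ range (m + 1), (a k : ℂ) * z ^ k = 0) : ‖z‖ ≤ R := by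
  have hmono : ∀ k < m, a k * R ^ k ≤ a (k + 1) * R ^ (k + 1) := fun k hk =>
    calc a k * R ^ k ≤ R * a (k + 1) * R ^ k := by gcongr; exact hratio k hk
      _ = a (k + 1) * R ^ (k + 1) := by ring
  have := norm_le_one_of_sum_eq_zero_of_monotone (b := fun k => a k * R ^ k) (z := z / R)
    (by simpa using h0) hmono (by positivity)
    (by rw [sum_ofReal_mul_pow_div_eq hR.ne', hz])
  rwa [norm_div, Complex.norm_real, Real.norm_of_nonneg hR.le, div_le_one hR] at this

theorem le_norm_of_forall_mul_le {r : ℝ} (hr : 0 < r) {a : ℕ → ℝ} (h0 : 0 < a 0) (hm : 0 ≤ a m)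
    (hratio : ∀ k < m, r * a (k + 1) ≤ a k)
    (hz : ∑ k ∈ range (m + 1), (a k : ℂ) * z ^ k = 0) : r ≤ ‖z‖ := by
  have hanti : ∀ k < m, a (k + 1) * r ^ (k + 1) ≤ a k * r ^ k := fun k hk =>
    calc a (k + 1) * r ^ (k + 1) = r * a (k + 1) * r ^ k := by ring
      _ ≤ a k * r ^ k := by gcongr; exact hratio k hk
  have := one_le_norm_of_sum_eq_zero_of_antitone (b := fun k => a k * r ^ k) (z := z / r)
    (by simpa using h0) hanti (by positivity)
    (by rw [sum_ofReal_mul_pow_div_eq hr.ne', hz])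
  rwa [norm_div, Complex.norm_real, Real.norm_of_nonneg hr.le, one_le_div hr] at this

end RootBounds

theorem stmt_17_general (m : ℕ) (a : ℕ → ℝ) (ha : ∀ k ≤ m, 0 < a k)
    (hne : (Finset.range m).Nonempty)
    (z : ℂ) (hz : ∑ k ∈ Finset.range (m + 1), (a k : ℂ) * z ^ k = 0) :
    (Finset.range m).inf' hne (fun k => a k / a (k + 1)) ≤ ‖z‖ ∧
    ‖z‖ ≤ (Finset.range m).sup' hne (fun k => a k / a (k + 1)) := by
  have hpos : ∀ k ∈ range m, 0 < a k / a (k + 1) := fun k hk =>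
    div_pos (ha k (mem_range.1 hk).le) (ha (k + 1) (mem_range.1 hk))
  have hR : 0 < (range m).sup' hne fun k => a k / a (k + 1) :=
    let ⟨k₀, hk₀⟩ := hne
    (hpos k₀ hk₀).trans_le (le_sup' (fun k => a k / a (k + 1)) hk₀)
  refine ⟨le_norm_of_forall_mul_le ((lt_inf'_iff hne).2 hpos) (ha 0 m.zero_le) (ha m le_rfl).le
      (fun k hk => ?_) hz, norm_le_of_forall_le_mul hR (ha 0 m.zero_le).le (ha m le_rfl)
      (fun k hk => ?_) hz⟩
  · exact (le_div_iff₀ (ha (k + 1) hk)).1 (inf'_le _ (mem_range.2 hk))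
  · exact (div_le_iff₀ (ha (k + 1) hk)).1 (le_sup' (fun k => a k / a (k + 1)) (mem_range.2 hk))

/-- Eneström–Kakeya: if `p(z) = Σ_{k=0}^m a_k z^k` has real strictly positive
coefficients (and degree `m ≥ 1`), then every zero of `p` satisfies
`min_k a_k/a_{k+1} ≤ |z| ≤ max_k a_k/a_{k+1}`. -/
theorem stmt_17 (m : ℕ) (hm : 1 ≤ m) (a : ℕ → ℝ) (ha : ∀ k ≤ m, 0 < a k)
    (hne : (Finset.range m).Nonempty)
    (z : ℂ) (hz : ∑ k ∈ Finset.range (m + 1), (a k : ℂ) * z ^ k = 0) :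
    (Finset.range m).inf' hne (fun k => a k / a (k + 1)) ≤ ‖z‖ ∧
    ‖z‖ ≤ (Finset.range m).sup' hne (fun k => a k / a (k + 1)) :=
  stmt_17_general m a ha hne z hz
end

section
/- Define f_m(z) = (z−1)^m + z^m + (z+1)^m. Then the limit set of zeros lim 𝒵(f_m) equals the imaginary axis {z ∈ ℂ : Re(z) = 0}; concretely, liminf 𝒵(f_m) = limsup 𝒵(f_m) = {Re z = 0}, where z* ∈ limsup 𝒵(f_m) iff every neighborhood of z* meets 𝒵(f_m) for infinitely many m, and z* ∈ liminf 𝒵(f_m) iff every neighborhood meets 𝒵(f_m) for all sufficiently large m. -/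
/-!
Off the imaginary axis one term dominates: for `Re z > 0` we have `‖z + 1‖ > max ‖z‖ ‖z - 1‖`,
with a ratio bounded away from `1` near any such point, so `(z + 1) ^ m` outweighs the other
two terms for all large `m`; the half-plane `Re z < 0` follows from
`f_m (-z) = (-1) ^ m f_m z`. On the axis, writing `z = i cot φ` gives
`sin φ ^ m * f_m z = i ^ m (2 cos (m φ) + cos φ ^ m)`, a real function of `φ` that changes
sign on every interval of length `π / m`; hence zeros of `f_m` on the axis become dense as
`m → ∞`.
-/

open Filter Topology

theorem setOf_liminf_eq_and_setOf_limsup_eq {E : Type*} [SeminormedAddCommGroup E]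
    {P : ℕ → E → Prop} {S : Set E}
    (hS : ∀ w ∈ S, ∀ r > (0 : ℝ), ∀ᶠ m in atTop, ∃ z, P m z ∧ ‖z - w‖ < r)
    (hSc : ∀ w ∉ S, ∀ᶠ p : ℕ × E in atTop ×ˢ 𝓝 w, ¬ P p.1 p.2) :
    {w | ∀ r > (0 : ℝ), ∃ N : ℕ, ∀ m ≥ N, ∃ z, P m z ∧ ‖z - w‖ < r} = S ∧
    {w | ∀ r > (0 : ℝ), ∀ N : ℕ, ∃ m ≥ N, ∃ z, P m z ∧ ‖z - w‖ < r} = S := by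
  have subset_liminf : S ⊆ {w | ∀ r > (0 : ℝ), ∃ N : ℕ, ∀ m ≥ N, ∃ z, P m z ∧ ‖z - w‖ < r} :=
    fun w hw r hr ↦ eventually_atTop.mp (hS w hw r hr)
  have liminf_subset_limsup :
      {w | ∀ r > (0 : ℝ), ∃ N : ℕ, ∀ m ≥ N, ∃ z, P m z ∧ ‖z - w‖ < r} ⊆
        {w | ∀ r > (0 : ℝ), ∀ N : ℕ, ∃ m ≥ N, ∃ z, P m z ∧ ‖z - w‖ < r} := by
    intro w hw r hr N
    obtain ⟨N₀, hN₀⟩ := hw r hr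
    exact ⟨max N N₀, le_max_left _ _, hN₀ _ (le_max_right _ _)⟩
  have limsup_subset : {w | ∀ r > (0 : ℝ), ∀ N : ℕ, ∃ m ≥ N, ∃ z, P m z ∧ ‖z - w‖ < r} ⊆ S := by
    intro w hw
    by_contra hwS
    obtain ⟨pa, hpa, pb, hpb, hP⟩ := eventually_prod_iff.mp (hSc w hwS)
    obtain ⟨N, hN⟩ := eventually_atTop.mp hpa
    obtain ⟨r, hr, hball⟩ := Metric.eventually_nhds_iff.mp hpb
    obtain ⟨m, hm, z, hPz, hz⟩ := hw r hr N
    exact hP (hN m hm) (hball (by rwa [dist_eq_norm])) hPz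
  exact ⟨subset_liminf.antisymm' (liminf_subset_limsup.trans limsup_subset),
    limsup_subset.antisymm (subset_liminf.trans liminf_subset_limsup)⟩

theorem pow_add_pow_add_pow_ne_zero {𝕜 : Type*} [NormedDivisionRing 𝕜] {a b c : 𝕜} {q : ℝ} {m : ℕ}
    (ha : ‖a‖ < q * ‖c‖) (hb : ‖b‖ < q * ‖c‖) (hq : 2 * q ^ m < 1) :
    a ^ m + b ^ m + c ^ m ≠ 0 := by
  have hqc : 0 < q * ‖c‖ := (norm_nonneg a).trans_lt ha
  have hc : 0 < ‖c‖ := pos_of_mul_pos_right hqc (by nlinarith [norm_nonneg c])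
  have hab : ‖a ^ m + b ^ m‖ < ‖c ^ m‖ :=
    calc ‖a ^ m + b ^ m‖ ≤ ‖a‖ ^ m + ‖b‖ ^ m := by
          simpa only [norm_pow] using norm_add_le (a ^ m) (b ^ m)
      _ ≤ (q * ‖c‖) ^ m + (q * ‖c‖) ^ m := by gcongr
      _ = 2 * q ^ m * ‖c‖ ^ m := by ring
      _ < ‖c ^ m‖ := by rw [norm_pow]; exact mul_lt_of_lt_one_left (pow_pos hc m) hq
  intro h
  rw [eq_neg_of_add_eq_zero_right h, norm_neg] at hab
  exact hab.false

namespace Complex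

theorem norm_lt_norm_add_one {z : ℂ} (hz : 0 < z.re) : ‖z‖ < ‖z + 1‖ := by
  rw [← sq_lt_sq₀ (norm_nonneg _) (norm_nonneg _), Complex.sq_norm, Complex.sq_norm, normSq_apply,
    normSq_apply]
  simp only [add_re, one_re, add_im, one_im, add_zero]
  nlinarith

theorem norm_sub_one_lt_norm_add_one {z : ℂ} (hz : 0 < z.re) : ‖z - 1‖ < ‖z + 1‖ := by
  rw [← sq_lt_sq₀ (norm_nonneg _) (norm_nonneg _), Complex.sq_norm, Complex.sq_norm, normSq_apply,
    normSq_apply]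
  simp only [sub_re, one_re, sub_im, one_im, sub_zero, add_re, add_im, add_zero]
  nlinarith

end Complex

open Complex in
theorem eventually_pow_add_pow_add_pow_ne_zero_of_re_pos {w : ℂ} (hw : 0 < w.re) :
    ∀ᶠ p : ℕ × ℂ in atTop ×ˢ 𝓝 w, (p.2 - 1) ^ p.1 + p.2 ^ p.1 + (p.2 + 1) ^ p.1 ≠ 0 := by
  have hw₁ : 0 < ‖w + 1‖ := (norm_nonneg w).trans_lt (norm_lt_norm_add_one hw)
  obtain ⟨q, hρq, hq₁⟩ : ∃ q, max ‖w - 1‖ ‖w‖ / ‖w + 1‖ < q ∧ q < 1 := exists_between <|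
    (div_lt_one hw₁).mpr (max_lt (norm_sub_one_lt_norm_add_one hw) (norm_lt_norm_add_one hw))
  have hq₀ : 0 ≤ q := (by positivity : 0 ≤ max ‖w - 1‖ ‖w‖ / ‖w + 1‖).trans hρq.le
  rw [div_lt_iff₀ hw₁, max_lt_iff] at hρq
  have hpow : ∀ᶠ m : ℕ in atTop, 2 * q ^ m < 1 := by
    have := (tendsto_pow_atTop_nhds_zero_of_lt_one hq₀ hq₁).const_mul 2
    rw [mul_zero] at this
    exact this.eventually (eventually_lt_nhds one_pos)
  have hnear : ∀ᶠ z in 𝓝 w, ‖z - 1‖ < q * ‖z + 1‖ ∧ ‖z‖ < q * ‖z + 1‖ :=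
    (ContinuousAt.eventually_lt (by fun_prop) (by fun_prop) hρq.1).and
      (ContinuousAt.eventually_lt (by fun_prop) (by fun_prop) hρq.2)
  filter_upwards [hpow.prod_mk hnear] with ⟨m, z⟩ ⟨hm, h₁, h₂⟩
  exact pow_add_pow_add_pow_ne_zero h₁ h₂ hm

theorem eventually_pow_add_pow_add_pow_ne_zero {w : ℂ} (hw : w.re ≠ 0) :
    ∀ᶠ p : ℕ × ℂ in atTop ×ˢ 𝓝 w, (p.2 - 1) ^ p.1 + p.2 ^ p.1 + (p.2 + 1) ^ p.1 ≠ 0 := by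
  rcases hw.lt_or_gt with hneg | hpos
  · have hflip : Tendsto (Prod.map id Neg.neg) (atTop ×ˢ 𝓝 w : Filter (ℕ × ℂ))
        (atTop ×ˢ 𝓝 (-w)) := tendsto_id.prodMap (tendsto_neg w)
    filter_upwards [hflip.eventually
      (eventually_pow_add_pow_add_pow_ne_zero_of_re_pos (by simpa using hneg))] with ⟨m, z⟩ h
    have hparity : (-z - 1) ^ m + (-z) ^ m + (-z + 1) ^ m =
        (-1) ^ m * ((z - 1) ^ m + z ^ m + (z + 1) ^ m) := by
      rw [show -z - 1 = -(z + 1) by ring, show -z + 1 = -(z - 1) by ring, neg_pow (z + 1),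
        neg_pow z, neg_pow (z - 1)]
      ring
    simpa [hparity] using h
  · exact eventually_pow_add_pow_add_pow_ne_zero_of_re_pos hpos

open Real in
theorem exists_mem_Icc_two_mul_cos_add_eq_zero {h : ℝ → ℝ} (hc : Continuous h)
    (hb : ∀ x, |h x| ≤ 2) {ω : ℝ} (hω : 0 < ω) (x₀ : ℝ) :
    ∃ x ∈ Set.Icc x₀ (x₀ + 3 * π / ω), 2 * cos (ω * x) + h x = 0 := by
  -- `cos (ω x)` runs from `1` to `-1` on `[a, a + π / ω]`, where `a` is the first multiple of
  -- `2π / ω` after `x₀`.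
  set k : ℤ := ⌈ω * x₀ / (2 * π)⌉
  set a : ℝ := k * (2 * π) / ω
  have hωa : ω * a = k * (2 * π) := mul_div_cancel₀ _ hω.ne'
  have hωb : ω * (a + π / ω) = k * (2 * π) + π := by rw [mul_add, hωa, mul_div_cancel₀ _ hω.ne']
  have hxa : x₀ ≤ a := by
    have := Int.le_ceil (ω * x₀ / (2 * π))
    rw [div_le_iff₀ (by positivity)] at this
    exact le_of_mul_le_mul_left (by linarith) hω
  have hbx : a + π / ω ≤ x₀ + 3 * π / ω := by
    have := Int.ceil_lt_add_one (ω * x₀ / (2 * π))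
    rw [div_add_one (by positivity), lt_div_iff₀ (by positivity)] at this
    refine le_of_mul_le_mul_left ?_ hω
    rw [hωb, mul_add, mul_div_cancel₀ _ hω.ne']
    linarith
  have hga : 0 ≤ 2 * cos (ω * a) + h a := by
    rw [hωa, cos_int_mul_two_pi]
    linarith [(abs_le.mp (hb a)).1]
  have hgb : 2 * cos (ω * (a + π / ω)) + h (a + π / ω) ≤ 0 := by
    rw [hωb, cos_int_mul_two_pi_add_pi]
    linarith [(abs_le.mp (hb (a + π / ω))).2]
  obtain ⟨x, ⟨hax, hxb⟩, hx⟩ :=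
    intermediate_value_Icc' (le_add_of_nonneg_right (by positivity) : a ≤ a + π / ω)
      (by fun_prop : Continuous fun x ↦ 2 * cos (ω * x) + h x).continuousOn ⟨hgb, hga⟩
  exact ⟨x, ⟨hxa.trans hax, hxb.trans hbx⟩, hx⟩

namespace Complex

theorem I_mul_cos_sub_sin_pow_add (φ : ℂ) (m : ℕ) :
    (I * cos φ - sin φ) ^ m + (I * cos φ) ^ m + (I * cos φ + sin φ) ^ m =
      I ^ m * (2 * cos (m * φ) + cos φ ^ m) := by
  have h₁ : I * cos φ - sin φ = I * (cos φ + sin φ * I) := by ring_nf; rw [I_sq]; ring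
  have h₂ : I * cos φ + sin φ = I * (cos (-φ) + sin (-φ) * I) := by
    rw [cos_neg, sin_neg]; ring_nf; rw [I_sq]; ring
  rw [h₁, h₂, mul_pow, mul_pow, mul_pow, cos_add_sin_mul_I_pow, cos_add_sin_mul_I_pow, mul_neg,
    cos_neg, sin_neg]
  ring

theorem pow_add_pow_add_pow_I_mul_cot_eq_zero {φ : ℂ} {m : ℕ} (hφ : sin φ ≠ 0)
    (h : 2 * cos (m * φ) + cos φ ^ m = 0) :
    let z := I * (cos φ / sin φ)
    (z - 1) ^ m + z ^ m + (z + 1) ^ m = 0 := by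
  intro z
  have hz : sin φ * z = I * cos φ := by simp only [z]; field_simp
  have hscale : sin φ ^ m * ((z - 1) ^ m + z ^ m + (z + 1) ^ m) =
      I ^ m * (2 * cos (m * φ) + cos φ ^ m) := by
    rw [← I_mul_cos_sub_sin_pow_add, ← hz, mul_add, mul_add, ← mul_pow, ← mul_pow, ← mul_pow,
      mul_sub_one, mul_add_one]
  rw [h, mul_zero] at hscale
  exact (mul_eq_zero.mp hscale).resolve_left (pow_ne_zero _ hφ)

end Complex

open Complex in
theorem eventually_exists_pow_add_pow_add_pow_eq_zero_near {w : ℂ} (hw : w.re = 0) {r : ℝ}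
    (hr : 0 < r) :
    ∀ᶠ m : ℕ in atTop, ∃ z : ℂ, (z - 1) ^ m + z ^ m + (z + 1) ^ m = 0 ∧ ‖z - w‖ < r := by
  -- `φ₀ = arccot (Im w)`, so that `w = I * cot φ₀`
  set φ₀ : ℝ := Real.pi / 2 - Real.arctan w.im
  have hsin₀ : sin (φ₀ : ℂ) ≠ 0 := by
    rw [← ofReal_sin, Real.sin_pi_div_two_sub]; exact_mod_cast (Real.cos_arctan_pos _).ne'
  have hcot₀ : I * (cos (φ₀ : ℂ) / sin φ₀) = w := by
    rw [← ofReal_cos, ← ofReal_sin, Real.cos_pi_div_two_sub, Real.sin_pi_div_two_sub, ← ofReal_div,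
      ← Real.tan_eq_sin_div_cos, Real.tan_arctan]
    apply Complex.ext <;> simp [hw]
  have hnear : ∀ᶠ φ : ℝ in 𝓝 φ₀, sin (φ : ℂ) ≠ 0 ∧ ‖I * (cos (φ : ℂ) / sin φ) - w‖ < r := by
    have hcot : ContinuousAt (fun φ : ℝ ↦ I * (cos (φ : ℂ) / sin φ)) φ₀ := by
      fun_prop (disch := exact hsin₀)
    refine ((by fun_prop : ContinuousAt (fun φ : ℝ ↦ sin (φ : ℂ)) φ₀).eventually_ne hsin₀).and ?_
    rw [← hcot₀]
    simpa only [dist_eq_norm] using Metric.tendsto_nhds.mp hcot r hr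
  obtain ⟨δ, hδ, hball⟩ := Metric.eventually_nhds_iff.mp hnear
  filter_upwards [(tendsto_const_div_atTop_nhds_zero_nat (3 * Real.pi)).eventually
    (eventually_lt_nhds hδ), eventually_gt_atTop 0] with m hm hm₀
  have hcos_pow : ∀ x, |Real.cos x ^ m| ≤ 2 := fun x ↦ by
    rw [abs_pow]
    linarith [pow_le_one₀ (abs_nonneg _) (Real.abs_cos_le_one x) (n := m)]
  obtain ⟨φ, ⟨hφ₀, hφ₁⟩, hφ⟩ := exists_mem_Icc_two_mul_cos_add_eq_zero (by fun_prop) hcos_pow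
    (by positivity : (0 : ℝ) < m) φ₀
  obtain ⟨hsin, hdist⟩ := hball (show dist φ φ₀ < δ by
    rw [Real.dist_eq, abs_lt]; constructor <;> linarith)
  exact ⟨_, pow_add_pow_add_pow_I_mul_cot_eq_zero hsin (by exact_mod_cast hφ), hdist⟩

/-- For `f_m(z) = (z-1)^m + z^m + (z+1)^m`, both the liminf and limsup of the
zero sets `𝒵(f_m)` equal the imaginary axis `{z : Re z = 0}`. -/
theorem stmt_18 :
    let f : ℕ → ℂ → ℂ := fun m z => (z - 1) ^ m + z ^ m + (z + 1) ^ m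
    ({w : ℂ | ∀ r > (0 : ℝ), ∃ N : ℕ, ∀ m ≥ N, ∃ z : ℂ, f m z = 0 ∧ ‖z - w‖ < r}
        = {z : ℂ | z.re = 0}) ∧
    ({w : ℂ | ∀ r > (0 : ℝ), ∀ N : ℕ, ∃ m ≥ N, ∃ z : ℂ, f m z = 0 ∧ ‖z - w‖ < r}
        = {z : ℂ | z.re = 0}) := by
  intro f
  exact setOf_liminf_eq_and_setOf_limsup_eq
    (fun _ hw _ hr ↦ eventually_exists_pow_add_pow_add_pow_eq_zero_near hw hr)
    (fun _ hw ↦ eventually_pow_add_pow_add_pow_ne_zero hw)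
end
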